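/- arXiv:1203.2125 — 11 statements merged into one kernel-verified Lean document; each statement's English description precedes it below -/
import Mathlib

section
/- Let ψ : G → H be any map. Then ψ is a polyadic homomorphism from der_{θ,b}(G,·) to der_{η,c}(H,∗) if and only if there exist an element a ∈ H and a group homomorphism φ : (G,·) → (H,∗) such that ψ(x) = φ(x) ∗ a for all x ∈ G, h(a,…,a) = φ(b) ∗ a (a repeated n times), and φ(θ(x)) = a ∗ η(φ(x)) ∗ a⁻¹ for all x ∈ G. -/
/-- The `n`-ary operation `f(x₁,…,xₙ) = x₁·θ(x₂)·θ²(x₃)⋯θ^{n-1}(xₙ)·b`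
of the polyadic group `der_{θ,b}(G,·)`. -/
def polyF {G : Type*} [Group G] (n : ℕ) (θ : G ≃* G) (b : G) (x : Fin n → G) : G :=
  (List.ofFn fun i : Fin n => (⇑θ)^[(i : ℕ)] (x i)).prod * b

section Helpers

variable {H : Type*} [Group H]

lemma iter_map_one (η : H ≃* H) (k : ℕ) : (⇑η)^[k] (1 : H) = 1 :=
  Function.iterate_fixed (map_one η) k

lemma iter_map_mul (η : H ≃* H) (k : ℕ) (x y : H) :
    (⇑η)^[k] (x * y) = (⇑η)^[k] x * (⇑η)^[k] y := by
  induction k with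
  | zero => rfl
  | succ k ih => simp [Function.iterate_succ_apply', ih]

lemma polyF_one (n : ℕ) (η : H ≃* H) (c : H) :
    polyF n η c (fun _ => 1) = c := by
  simp [polyF, iter_map_one]

lemma polyF_update0 (m : ℕ) (η : H ≃* H) (c : H) (x : Fin (m+1) → H) (u : H) :
    polyF (m+1) η c (Function.update x 0 u) = u * (x 0)⁻¹ * polyF (m+1) η c x := by
  have h : ∀ i : Fin m, (Function.update x 0 u) i.succ = x i.succ := fun i =>
    Function.update_of_ne (Fin.succ_ne_zero i) _ _
  simp only [polyF, List.ofFn_succ, List.prod_cons, h, Function.update_self,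
    Fin.val_zero, Function.iterate_zero, id_eq]
  group

lemma polyF_update1 (m : ℕ) (η : H ≃* H) (c : H) (x : Fin (m+2) → H) (v : H) :
    polyF (m+2) η c (Function.update x 1 v) =
      x 0 * η v * (η (x 1))⁻¹ * (x 0)⁻¹ * polyF (m+2) η c x := by
  have h0 : (Function.update x 1 v) 0 = x 0 :=
    Function.update_of_ne (by simp [Fin.ext_iff]) _ _
  have h : ∀ i : Fin m, (Function.update x 1 v) i.succ.succ = x i.succ.succ := fun i =>
    Function.update_of_ne (by simp [Fin.ext_iff]) _ _
  have h1 : (Function.update x 1 v) 1 = v := Function.update_self _ _ _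
  simp only [polyF, List.ofFn_succ, List.prod_cons, Fin.succ_zero_eq_one, h0, h, h1,
    Fin.val_zero, Function.iterate_zero, id_eq, Fin.val_succ, Fin.val_one,
    Nat.zero_add, Function.iterate_one]
  group

lemma polyF_pair (m : ℕ) (η : H ≃* H) (c : H) (u v w : H) :
    polyF (m+2) η c (Function.update (Function.update (fun _ => w) 1 v) 0 u)
      = u * η v * (η w)⁻¹ * w⁻¹ * polyF (m+2) η c (fun _ => w) := by
  rw [polyF_update0, polyF_update1,
    Function.update_of_ne (show (0 : Fin (m+2)) ≠ 1 by simp [Fin.ext_iff])]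
  group

def pProd (η : H ≃* H) (a : H) (k : ℕ) : H :=
  (List.ofFn fun j : Fin k => (⇑η)^[(j : ℕ)] a).prod

lemma pProd_succ' (η : H ≃* H) (a : H) (k : ℕ) :
    pProd η a (k+1) = pProd η a k * (⇑η)^[k] a := by
  rw [pProd, pProd, List.ofFn_succ', List.concat_eq_append, List.prod_append,
    List.prod_cons, List.prod_nil, mul_one]
  simp [Fin.val_last, Fin.coe_castSucc]

lemma pProd_succ (η : H ≃* H) (a : H) (k : ℕ) :
    pProd η a (k+1) = a * η (pProd η a k) := by
  rw [pProd, List.ofFn_succ, List.prod_cons]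
  simp only [Fin.val_zero, Function.iterate_zero, id_eq, Fin.val_succ]
  congr 1
  rw [pProd, map_list_prod η, List.map_ofFn]
  simp [Function.comp_def, Function.iterate_succ_apply']

lemma telescope (η : H ≃* H) (a : H) (n : ℕ) (y : Fin n → H) :
    (List.ofFn fun i : Fin n => pProd η a i * y i * (pProd η a i)⁻¹).prod
      = (List.ofFn fun i : Fin n => y i * (⇑η)^[(i : ℕ)] a).prod * (pProd η a n)⁻¹ := by
  induction n with
  | zero => simp [pProd]
  | succ n ih =>
    rw [List.ofFn_succ' (fun i : Fin (n+1) => pProd η a i * y i * (pProd η a i)⁻¹),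
      List.ofFn_succ' (fun i : Fin (n+1) => y i * (⇑η)^[(i : ℕ)] a)]
    simp only [List.concat_eq_append, List.prod_append, List.prod_cons, List.prod_nil,
      Fin.coe_castSucc, Fin.val_last, mul_one]
    rw [ih (fun i => y i.castSucc), pProd_succ']
    group

end Helpers

/-- A map `ψ : G → H` is a polyadic homomorphism `der_{θ,b}(G,·) → der_{η,c}(H,∗)`
iff `ψ = R_a ∘ φ` for a group homomorphism `φ` and an element `a` satisfying
`h(a,…,a) = φ(b)∗a` and `φ∘θ = I_a ∘ η ∘ φ`. -/
theorem polyadic_hom_iff {G H : Type*} [Group G] [Group H]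
    (n : ℕ) (hn : 2 ≤ n)
    (θ : G ≃* G) (b : G) (hbθ : θ b = b)
    (hθ : ∀ x : G, (⇑θ)^[n - 1] x = b * x * b⁻¹)
    (η : H ≃* H) (c : H) (hcη : η c = c)
    (hη : ∀ y : H, (⇑η)^[n - 1] y = c * y * c⁻¹)
    (ψ : G → H) :
    (∀ x : Fin n → G, ψ (polyF n θ b x) = polyF n η c (fun i => ψ (x i))) ↔
      ∃ (a : H) (φ : G →* H),
        (∀ g : G, ψ g = φ g * a) ∧
        polyF n η c (fun _ => a) = φ b * a ∧
        (∀ g : G, φ (θ g) = a * η (φ g) * a⁻¹) := by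
  obtain ⟨m, rfl⟩ : ∃ m, n = m + 2 := ⟨n - 2, by omega⟩
  constructor
  · intro hom
    set a := ψ 1 with ha
    have e0 : ψ b = polyF (m+2) η c (fun _ => a) := by
      have h := hom (fun _ => 1)
      rw [polyF_one] at h
      exact h
    have e2 : ∀ u v : G,
        ψ (u * θ v * b) = ψ u * η (ψ v) * (η a)⁻¹ * a⁻¹ * ψ b := by
      intro u v
      have h := hom (Function.update (Function.update (fun _ => (1:G)) 1 v) 0 u)
      have key : (fun i : Fin (m+2) =>
          ψ (Function.update (Function.update (fun _ => (1:G)) 1 v) 0 u i))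
          = Function.update (Function.update (fun _ : Fin (m+2) => a) 1 (ψ v)) 0 (ψ u) := by
        funext i
        simp only [Function.update_apply, ha]
        split_ifs <;> rfl
      rw [key, polyF_pair, polyF_pair, polyF_one, ← e0, map_one] at h
      simp only [inv_one, mul_one, one_mul] at h
      exact h
    have mulkey : ∀ u w : G, ψ (u * w) = ψ u * a⁻¹ * ψ w := by
      intro u w
      have h1 := e2 u (θ.symm (w * b⁻¹))
      have h2 := e2 1 (θ.symm (w * b⁻¹))
      rw [MulEquiv.apply_symm_apply] at h1 h2
      rw [show u * (w * b⁻¹) * b = u * w by group] at h1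
      rw [show (1:G) * (w * b⁻¹) * b = w by group, ← ha] at h2
      rw [h1, h2]
      group
    have hth : ∀ g : G, ψ (θ g) = a * η (ψ g) * (η a)⁻¹ := by
      intro g
      have h1 := e2 1 g
      rw [one_mul, mulkey (θ g) b, ← ha] at h1
      have h2 : ψ (θ g) * a⁻¹ = a * η (ψ g) * (η a)⁻¹ * a⁻¹ := by
        apply mul_right_cancel (b := ψ b)
        rw [mul_assoc, mul_assoc] at h1 ⊢
        exact h1
      calc ψ (θ g) = ψ (θ g) * a⁻¹ * a := by group
        _ = a * η (ψ g) * (η a)⁻¹ * a⁻¹ * a := by rw [h2]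
        _ = a * η (ψ g) * (η a)⁻¹ := by group
    refine ⟨a, MonoidHom.mk' (fun g => ψ g * a⁻¹)
      (fun u w => by
        show ψ (u * w) * a⁻¹ = (ψ u * a⁻¹) * (ψ w * a⁻¹)
        rw [mulkey]; group),
      ?_, ?_, ?_⟩
    · intro g
      show ψ g = ψ g * a⁻¹ * a
      group
    · show polyF (m+2) η c (fun _ => a) = ψ b * a⁻¹ * a
      rw [e0]; group
    · intro g
      show ψ (θ g) * a⁻¹ = a * η (ψ g * a⁻¹) * a⁻¹
      rw [map_mul, map_inv, hth g]
      group
  · rintro ⟨a, φ, hψ, hb, hθφ⟩ x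
    have hiter : ∀ (k : ℕ) (g : G),
        φ ((⇑θ)^[k] g) = pProd η a k * (⇑η)^[k] (φ g) * (pProd η a k)⁻¹ := by
      intro k
      induction k with
      | zero => intro g; simp [pProd]
      | succ k ih =>
        intro g
        rw [Function.iterate_succ_apply', hθφ, ih, pProd_succ,
          Function.iterate_succ_apply']
        simp only [map_mul, map_inv]
        group
    have hb' : φ b * a = pProd η a (m+2) * c := by
      rw [← hb]; rfl
    have step1 : ψ (polyF (m+2) θ b x) =
        (List.ofFn fun i : Fin (m+2) =>
          pProd η a (i : ℕ) * (⇑η)^[(i : ℕ)] (φ (x i)) * (pProd η a (i : ℕ))⁻¹).prod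
          * φ b * a := by
      rw [hψ, polyF, map_mul, map_list_prod, List.map_ofFn]
      simp only [Function.comp_def, hiter]
    rw [step1, telescope η a (m+2) (fun i : Fin (m+2) => (⇑η)^[(i : ℕ)] (φ (x i)))]
    have hc : (pProd η a (m+2))⁻¹ * (φ b * a) = c := by
      rw [hb']; group
    calc (List.ofFn fun i : Fin (m+2) =>
            (⇑η)^[(i : ℕ)] (φ (x i)) * (⇑η)^[(i : ℕ)] a).prod
          * (pProd η a (m+2))⁻¹ * φ b * a
        = (List.ofFn fun i : Fin (m+2) =>
            (⇑η)^[(i : ℕ)] (φ (x i)) * (⇑η)^[(i : ℕ)] a).prod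
          * ((pProd η a (m+2))⁻¹ * (φ b * a)) := by group
      _ = polyF (m+2) η c (fun i => ψ (x i)) := by
          rw [hc, polyF]
          simp only [hψ, iter_map_mul]
end

section
/- Assume n ≥ 3. For all x, h ∈ G one has f(x̄, x, …, x, h, x) = θ⁻¹(x⁻¹·h)·x, where x is repeated n−3 times between x̄ and h. Consequently, a polyadic subgroup H of (G,f) satisfies f(x̄, x, …, x, h, x) ∈ H for all x ∈ G and h ∈ H if and only if θ⁻¹(x⁻¹·h)·x ∈ H for all x ∈ G and h ∈ H. -/
/-- The skew element `x̄ = b⁻¹·θ^{n−2}(x⁻¹)⋯θ²(x⁻¹)·θ(x⁻¹)`. -/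
def polySkew {G : Type*} [Group G] (n : ℕ) (θ : G ≃* G) (b : G) (x : G) : G :=
  b⁻¹ * (List.ofFn fun i : Fin (n - 2) => (⇑θ)^[n - 2 - (i : ℕ)] x⁻¹).prod

/-- `H` is a polyadic subgroup of `(G,f)`: nonempty, closed under `f` and the skew map. -/
def IsPolySubgroup {G : Type*} [Group G] (n : ℕ) (θ : G ≃* G) (b : G) (H : Set G) : Prop :=
  H.Nonempty ∧
  (∀ x : Fin n → G, (∀ i, x i ∈ H) → polyF n θ b x ∈ H) ∧
  (∀ x ∈ H, polySkew n θ b x ∈ H)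

/-- `H` is a normal polyadic subgroup of `(G,f)`. -/
def IsNormalPolySubgroup {G : Type*} [Group G] (n : ℕ) (θ : G ≃* G) (b : G) (H : Set G) : Prop :=
  IsPolySubgroup n θ b H ∧ ∀ x : G, ∀ h ∈ H, θ.symm (x⁻¹ * h) * x ∈ H

/-- A congruence of the polyadic group `(G,f)`. -/
def IsPolyCongruence {G : Type*} [Group G] (n : ℕ) (θ : G ≃* G) (b : G)
    (R : G → G → Prop) : Prop :=
  Equivalence R ∧
  (∀ x y : Fin n → G, (∀ i, R (x i) (y i)) → R (polyF n θ b x) (polyF n θ b y)) ∧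
  (∀ x y : G, R x y → R (polySkew n θ b x) (polySkew n θ b y))

lemma iterMul {G : Type*} [Group G] (θ : G ≃* G) (k:ℕ) (a c : G):
    (⇑θ)^[k] (a*c) = (⇑θ)^[k] a * (⇑θ)^[k] c := by
  induction k with
  | zero => rfl
  | succ k ih => simp [Function.iterate_succ_apply', ih]
lemma iterInv {G : Type*} [Group G] (θ : G ≃* G) (k:ℕ) (a : G):
    (⇑θ)^[k] a⁻¹ = ((⇑θ)^[k] a)⁻¹ := by
  induction k with
  | zero => rfl
  | succ k ih => simp [Function.iterate_succ_apply', ih]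
lemma telescope_s2 {G : Type*} [Group G] (θ : G ≃* G) (x : G) (k : ℕ) :
    (List.ofFn fun i : Fin k => (⇑θ)^[k - (i:ℕ)] x⁻¹).prod *
    (List.ofFn fun i : Fin k => (⇑θ)^[(i:ℕ)+1] x).prod = 1 := by
  induction k with
  | zero => simp
  | succ k ih =>
    rw [List.ofFn_succ, List.ofFn_succ' (f := fun i : Fin (k+1) => (⇑θ)^[(i:ℕ)+1] x),
      List.prod_cons, List.prod_concat]
    simp only [Fin.val_succ, Fin.val_zero, Nat.add_sub_add_right, Nat.sub_zero,
      Fin.coe_castSucc, Fin.val_last]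
    rw [mul_assoc ((⇑θ)^[k + 1] x⁻¹), ← mul_assoc (List.ofFn _).prod, ih, one_mul,
      iterInv, inv_mul_cancel]
lemma tailProd {G : Type*} [Group G] (θ : G ≃* G) (x h : G) :
    ∀ m k : ℕ, (List.ofFn fun i : Fin (m+2) =>
        (⇑θ)^[(i:ℕ)+k] (if (i:ℕ) = m then h else x)).prod
      = (List.ofFn fun i : Fin m => (⇑θ)^[(i:ℕ)+k] x).prod *
          ((⇑θ)^[m+k] h * (⇑θ)^[m+1+k] x) := by
  intro m
  induction m with
  | zero =>
    intro k
    simp [List.ofFn_succ]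
  | succ m ih =>
    intro k
    rw [List.ofFn_succ, List.prod_cons, List.ofFn_succ (f := fun i : Fin (m+1) =>
      (⇑θ)^[(i:ℕ)+k] x), List.prod_cons]
    have h1 : (fun i : Fin (m+2) => (⇑θ)^[((i.succ:ℕ))+k]
        (if ((i.succ:ℕ)) = m+1 then h else x))
        = fun i : Fin (m+2) => (⇑θ)^[(i:ℕ)+(k+1)] (if (i:ℕ) = m then h else x) := by
      funext i
      simp only [Fin.val_succ, add_left_inj]
      congr 1
      omega
    rw [h1, ih (k+1)]
    have h2 : (fun i : Fin m => (⇑θ)^[((i.succ:ℕ))+k] x)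
        = fun i : Fin m => (⇑θ)^[(i:ℕ)+(k+1)] x := by
      funext i
      congr 1
      simp only [Fin.val_succ]
      omega
    rw [h2]
    rw [Fin.val_zero, if_neg (by omega : ¬(0:ℕ) = m+1), show m+(k+1) = m+1+k by omega,
      show m+1+(k+1) = m+1+1+k by omega, zero_add, mul_assoc]
    simp
/-- For `n ≥ 3`, `f(x̄, x, …, x, h, x) = θ⁻¹(x⁻¹·h)·x` (with `x` repeated `n−3`
times between `x̄` and `h`); consequently a polyadic subgroup `H` satisfies
`f(x̄,x,…,x,h,x) ∈ H` for all `x ∈ G, h ∈ H` iff `θ⁻¹(x⁻¹·h)·x ∈ H` for all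
`x ∈ G, h ∈ H`. -/
theorem conj_formula {G : Type*} [Group G] (n : ℕ) (hn : 3 ≤ n)
    (θ : G ≃* G) (b : G) (hbθ : θ b = b)
    (hθ : ∀ x : G, (⇑θ)^[n - 1] x = b * x * b⁻¹) :
    (∀ x h : G,
      polyF n θ b (fun i : Fin n =>
        if (i : ℕ) = 0 then polySkew n θ b x else if (i : ℕ) = n - 2 then h else x) =
        θ.symm (x⁻¹ * h) * x) ∧
    (∀ H : Set G, IsPolySubgroup n θ b H →
      ((∀ x : G, ∀ h ∈ H,
          polyF n θ b (fun i : Fin n =>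
            if (i : ℕ) = 0 then polySkew n θ b x else if (i : ℕ) = n - 2 then h else x) ∈ H) ↔
        (∀ x : G, ∀ h ∈ H, θ.symm (x⁻¹ * h) * x ∈ H))) := by
  obtain ⟨m, rfl⟩ : ∃ m, n = m + 3 := ⟨n - 3, by omega⟩
  simp only [show m + 3 - 1 = m + 2 from by omega] at hθ
  have hpow : ∀ y : G, (⇑θ)^[m+1] y = b * θ.symm y * b⁻¹ := by
    intro y
    have h1 : (⇑θ)^[m+2] (θ.symm y) = (⇑θ)^[m+1] y := by
      rw [Function.iterate_succ_apply, MulEquiv.apply_symm_apply]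
    rw [← h1, hθ]
  have key : ∀ x h : G,
      polyF (m+3) θ b (fun i : Fin (m+3) =>
        if (i : ℕ) = 0 then polySkew (m+3) θ b x
        else if (i : ℕ) = (m+3) - 2 then h else x) = θ.symm (x⁻¹ * h) * x := by
    intro x h
    unfold polyF polySkew
    simp only [show m + 3 - 2 = m + 1 from by omega, Fin.coe_cast]
    rw [List.ofFn_succ, List.prod_cons]
    have hhead : (⇑θ)^[((0 : Fin (m+3)) : ℕ)]
        (if ((0 : Fin (m+3)) : ℕ) = 0 then
          b⁻¹ * (List.ofFn fun i : Fin (m+1) => (⇑θ)^[m + 1 - (i : ℕ)] x⁻¹).prod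
        else if ((0 : Fin (m+3)) : ℕ) = m + 1 then h else x)
        = b⁻¹ * (List.ofFn fun i : Fin (m+1) => (⇑θ)^[m + 1 - (i : ℕ)] x⁻¹).prod := by
      simp
    rw [hhead]
    have htail : (fun i : Fin (m+2) => (⇑θ)^[((i.succ : Fin (m+3)) : ℕ)]
        (if ((i.succ : Fin (m+3)) : ℕ) = 0 then
          b⁻¹ * (List.ofFn fun j : Fin (m+1) => (⇑θ)^[m + 1 - (j : ℕ)] x⁻¹).prod
        else if ((i.succ : Fin (m+3)) : ℕ) = m + 1 then h else x))
        = fun i : Fin (m+2) => (⇑θ)^[(i : ℕ) + 1] (if (i : ℕ) = m then h else x) := by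
      funext i
      simp only [Fin.val_succ, Nat.succ_ne_zero, if_false, add_left_inj]
    rw [htail, tailProd θ x h m 1]
    have hA : (List.ofFn fun i : Fin (m+1) => (⇑θ)^[m + 1 - (i : ℕ)] x⁻¹).prod
        = (⇑θ)^[m+1] x⁻¹ * (List.ofFn fun i : Fin m => (⇑θ)^[m - (i : ℕ)] x⁻¹).prod := by
      rw [List.ofFn_succ, List.prod_cons]
      simp only [Fin.val_succ, Fin.val_zero, Nat.add_sub_add_right, Nat.sub_zero]
    rw [hA]
    have hAB := telescope_s2 θ x m
    set A := (List.ofFn fun i : Fin m => (⇑θ)^[m - (i : ℕ)] x⁻¹).prod with hAdef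
    set B := (List.ofFn fun i : Fin m => (⇑θ)^[(i : ℕ) + 1] x).prod with hBdef
    have step1 : b⁻¹ * ((⇑θ)^[m+1] x⁻¹ * A) * (B * ((⇑θ)^[m+1] h * (⇑θ)^[m+1+1] x)) * b
        = b⁻¹ * (⇑θ)^[m+1] x⁻¹ * (A * B) * ((⇑θ)^[m+1] h * (⇑θ)^[m+1+1] x) * b := by
      group
    rw [step1, hAB, mul_one]
    have step2 : (⇑θ)^[m+1] x⁻¹ * ((⇑θ)^[m+1] h * (⇑θ)^[m+1+1] x)
        = (⇑θ)^[m+1] (x⁻¹ * h) * (⇑θ)^[m+2] x := by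
      rw [iterMul, mul_assoc]
    rw [mul_assoc (b⁻¹), step2, hpow, hθ]
    group
  refine ⟨key, fun H _ => ⟨fun hall x h hH => ?_, fun hall x h hH => ?_⟩⟩
  · rw [← key x h]; exact hall x h hH
  · rw [key x h]; exact hall x h hH
end

section
/- If {u} is a singleton normal polyadic subgroup of (G,f), then u is an n-ary identity of (G,f), i.e. f(u,…,u,x,u,…,u) = x for every x ∈ G and every position 1 ≤ i ≤ n of x among the u's; in particular (G,f) is reduced, i.e. derived from an ordinary group. -/


lemma prod_ofFn_ite {G : Type*} [Group G] :
    ∀ (n : ℕ) (i : Fin n) (v u : G),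
      (List.ofFn fun j : Fin n => if j = i then v else u).prod
        = u ^ (i : ℕ) * v * u ^ (n - 1 - (i : ℕ)) := by
  intro n
  induction n with
  | zero => exact fun i => i.elim0
  | succ n ih =>
    intro i v u
    induction i using Fin.cases with
    | zero =>
      simp [List.ofFn_succ, (Fin.succ_ne_zero _), List.ofFn_const, List.prod_replicate]
    | succ i' =>
      rw [List.ofFn_succ, List.prod_cons,
        if_neg (Ne.symm (Fin.succ_ne_zero i'))]
      simp only [Fin.succ_inj]
      rw [ih i' v u]
      simp only [Fin.val_succ]
      rw [show n + 1 - 1 - ((i' : ℕ) + 1) = n - 1 - (i' : ℕ) by omega,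
        pow_succ' u (i' : ℕ)]
      group

/-- If `{u}` is a singleton normal polyadic subgroup of `(G,f)`, then `u` is an
`n`-ary identity: `f(u,…,u,x,u,…,u) = x` for every `x` and every position `i`;
in particular `(G,f)` is reduced (derived from an ordinary group). -/
theorem singleton_normal_gives_identity {G : Type*} [Group G] (n : ℕ) (hn : 2 ≤ n)
    (θ : G ≃* G) (b : G) (hbθ : θ b = b)
    (hθ : ∀ x : G, (⇑θ)^[n - 1] x = b * x * b⁻¹)
    (u : G) (hH : IsNormalPolySubgroup n θ b {u}) :
    ∀ (x : G) (i : Fin n), polyF n θ b (fun j : Fin n => if j = i then x else u) = x := by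
  obtain ⟨⟨-, hclosed, -⟩, hnorm⟩ := hH
  have hnorm' : ∀ x : G, θ.symm (x⁻¹ * u) * x = u := fun x => hnorm x u rfl
  have hθu : θ u = u := by
    have h := hnorm' 1
    simp at h
    have := congrArg θ h
    simpa using this.symm
  have hθconj : ∀ x : G, θ x = u⁻¹ * x * u := by
    intro x
    have h := hnorm' x⁻¹
    simp only [inv_inv] at h
    have h2 : θ.symm (x * u) = u * x := by
      have := congrArg (· * x) h
      simpa [mul_assoc] using this
    have h3 := congrArg θ h2
    simp only [MulEquiv.apply_symm_apply, map_mul, hθu] at h3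
    exact mul_left_cancel (a := u) (by rw [← h3]; group)
  have hfix : ∀ j : ℕ, (⇑θ)^[j] u = u := fun j => Function.iterate_fixed hθu j
  have hiter : ∀ (j : ℕ) (z : G), (⇑θ)^[j] z = (u ^ j)⁻¹ * z * u ^ j := by
    intro j
    induction j with
    | zero => simp
    | succ j ih =>
      intro z
      rw [Function.iterate_succ_apply', ih, hθconj, pow_succ]
      group
  have hcl : u ^ n * b = u := by
    have h := hclosed (fun _ => u) (fun _ => rfl)
    simp only [Set.mem_singleton_iff, polyF, hfix, List.ofFn_const,
      List.prod_replicate] at h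
    exact h
  have hb : u ^ (n - 1) * b = 1 := by
    have hx : u * (u ^ (n - 1) * b) = u * 1 := by
      rw [mul_one, ← mul_assoc, ← pow_succ', show n - 1 + 1 = n by omega, hcl]
    exact mul_left_cancel hx
  intro x i
  unfold polyF
  have hfun : (fun j : Fin n => (⇑θ)^[(j : ℕ)] (if j = i then x else u))
      = fun j : Fin n => if j = i then (u ^ (i : ℕ))⁻¹ * x * u ^ (i : ℕ) else u := by
    funext j
    by_cases hj : j = i
    · subst hj; simp [hiter]
    · simp [hj, hfix]
  rw [hfun, prod_ofFn_ite]
  have hi : (i : ℕ) ≤ n - 1 := by omega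
  calc u ^ (i : ℕ) * ((u ^ (i : ℕ))⁻¹ * x * u ^ (i : ℕ)) * u ^ (n - 1 - (i : ℕ)) * b
      = x * (u ^ (i : ℕ) * u ^ (n - 1 - (i : ℕ))) * b := by group
    _ = x * u ^ (n - 1) * b := by rw [← pow_add, Nat.add_sub_cancel' hi]
    _ = x := by rw [mul_assoc, hb, mul_one]
end

section
/- A relation R on G is a congruence of (G,f) if and only if R is an equivalence relation on G and the set {(x,y) ∈ G×G : xRy} is a subgroup of the direct product group G×G that is invariant under the automorphism (x,y) ↦ (θ(x),θ(y)) of G×G. -/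
private lemma polyIterOne {G : Type*} [Group G] (θ : G ≃* G) :
    ∀ k, (⇑θ)^[k] (1 : G) = 1 := by
  intro k
  induction k with
  | zero => rfl
  | succ k ih => rw [Function.iterate_succ_apply', ih, map_one]

private lemma polyIterR {G : Type*} [Group G] (θ : G ≃* G) {R : G → G → Prop}
    (h : ∀ x y, R x y → R (θ x) (θ y)) :
    ∀ k x y, R x y → R ((⇑θ)^[k] x) ((⇑θ)^[k] y) := by
  intro k
  induction k with
  | zero => exact fun x y hxy => hxy
  | succ k ih =>
      intro x y hxy
      rw [Function.iterate_succ_apply', Function.iterate_succ_apply']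
      exact h _ _ (ih x y hxy)

private lemma polyProdR {G : Type*} [Group G] {R : G → G → Prop}
    (h1 : R 1 1) (hmul : ∀ a b c d, R a b → R c d → R (a * c) (b * d)) :
    ∀ m (x y : Fin m → G), (∀ i, R (x i) (y i)) →
      R (List.ofFn x).prod (List.ofFn y).prod := by
  intro m
  induction m with
  | zero => intro x y _; simpa using h1
  | succ m ih =>
      intro x y h
      rw [List.ofFn_succ, List.ofFn_succ, List.prod_cons, List.prod_cons]
      exact hmul _ _ _ _ (h 0) (ih _ _ fun i => h i.succ)

private lemma polyF_two {G : Type*} [Group G] (m : ℕ) (θ : G ≃* G) (b : G) (u v : G) :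
    polyF (m + 2) θ b
      (fun i : Fin (m + 2) => if (i : ℕ) = 0 then u else if (i : ℕ) = 1 then v else 1)
      = u * (θ v * b) := by
  unfold polyF
  rw [List.ofFn_succ, List.ofFn_succ, List.prod_cons, List.prod_cons]
  have htail : (List.ofFn fun i : Fin m =>
      (⇑θ)^[(((i.succ).succ : Fin (m + 2)) : ℕ)]
        ((fun j : Fin (m + 2) => if (j : ℕ) = 0 then u else if (j : ℕ) = 1 then v else 1)
          (i.succ).succ)).prod = 1 := by
    apply List.prod_eq_one
    intro a ha
    rw [List.mem_ofFn] at ha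
    obtain ⟨i, rfl⟩ := ha
    simp [Fin.val_succ, polyIterOne]
  simp only [Fin.val_succ, Fin.val_zero] at htail ⊢
  rw [htail]
  simp [mul_assoc]

/-- `R` is a congruence of `(G,f)` iff `R` is an equivalence relation and
`{(x,y) : xRy}` is a `θ`-invariant subgroup of the direct product `G × G`. -/
theorem congruence_iff_theta_invariant_subgroup {G : Type*} [Group G] (n : ℕ) (hn : 2 ≤ n)
    (θ : G ≃* G) (b : G) (hbθ : θ b = b)
    (hθ : ∀ x : G, (⇑θ)^[n - 1] x = b * x * b⁻¹)
    (R : G → G → Prop) :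
    IsPolyCongruence n θ b R ↔
      Equivalence R ∧
      (∃ S : Subgroup (G × G), (S : Set (G × G)) = {p : G × G | R p.1 p.2}) ∧
      (∀ x y : G, R x y → R (θ x) (θ y)) := by
  obtain ⟨m, rfl⟩ : ∃ m, n = m + 2 := ⟨n - 2, by omega⟩
  constructor
  · rintro ⟨hEq, hF, hS⟩
    -- right translation invariance
    have hright : ∀ x y t : G, R x y → R (x * t) (y * t) := by
      intro x y t hxy
      have := hF
        (fun i : Fin (m + 2) =>
          if (i : ℕ) = 0 then x else if (i : ℕ) = 1 then θ.symm (t * b⁻¹) else 1)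
        (fun i : Fin (m + 2) =>
          if (i : ℕ) = 0 then y else if (i : ℕ) = 1 then θ.symm (t * b⁻¹) else 1)
        (by
          intro i
          by_cases h0 : (i : ℕ) = 0
          · simpa [h0] using hxy
          · by_cases h1 : (i : ℕ) = 1
            · simp only [h0, h1, if_false, if_true]
              exact hEq.refl _
            · simp only [h0, h1, if_false]
              exact hEq.refl _)
      rw [polyF_two, polyF_two] at this
      simpa [mul_assoc] using this
    -- s * θ · invariance
    have hsθ : ∀ s x y : G, R x y → R (s * θ x) (s * θ y) := by
      intro s x y hxy
      have := hF
        (fun i : Fin (m + 2) => if (i : ℕ) = 0 then s else if (i : ℕ) = 1 then x else 1)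
        (fun i : Fin (m + 2) => if (i : ℕ) = 0 then s else if (i : ℕ) = 1 then y else 1)
        (by
          intro i
          by_cases h0 : (i : ℕ) = 0
          · simp only [h0, if_true]; exact hEq.refl _
          · by_cases h1 : (i : ℕ) = 1
            · simpa [h0, h1] using hxy
            · simp only [h0, h1, if_false]; exact hEq.refl _)
      rw [polyF_two, polyF_two] at this
      have h2 := hright _ _ b⁻¹ this
      simpa [mul_assoc] using h2
    have hθinv : ∀ x y : G, R x y → R (θ x) (θ y) := by
      intro x y hxy
      simpa using hsθ 1 x y hxy
    -- left translation invariance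
    have hleft : ∀ x y s : G, R x y → R (s * x) (s * y) := by
      intro x y s hxy
      have h1 := polyIterR θ hθinv m x y hxy
      have h2 := hsθ (s * b⁻¹) _ _ h1
      have e : ∀ z : G, s * b⁻¹ * θ ((⇑θ)^[m] z) = s * z * b⁻¹ := by
        intro z
        have : (⇑θ)^[m + 2 - 1] z = b * z * b⁻¹ := hθ z
        rw [show m + 2 - 1 = m + 1 from rfl, Function.iterate_succ_apply'] at this
        rw [this]
        group
      rw [e x, e y] at h2
      have h3 := hright _ _ b h2
      simpa [mul_assoc] using h3
    have hmul : ∀ a c d e : G, R a c → R d e → R (a * d) (c * e) := by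
      intro a c d e h1 h2
      exact hEq.trans (hright a c d h1) (hleft d e c h2)
    have hinv : ∀ x y : G, R x y → R x⁻¹ y⁻¹ := by
      intro x y hxy
      have h1 := hleft x y x⁻¹ hxy
      have h2 := hright _ _ y⁻¹ h1
      simp only [inv_mul_cancel, one_mul, mul_inv_cancel_right] at h2
      exact hEq.symm h2
    refine ⟨hEq, ⟨⟨{ carrier := setOf fun p : G × G => R p.1 p.2
                     one_mem' := hEq.refl 1
                     mul_mem' := fun {p} {q} hp hq => hmul _ _ _ _ hp hq
                     inv_mem' := fun {p} hp => hinv _ _ hp }, rfl⟩, hθinv⟩⟩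
  · rintro ⟨hEq, ⟨S, hSet⟩, hθinv⟩
    have hmem : ∀ p : G × G, p ∈ S ↔ R p.1 p.2 := by
      intro p
      rw [← SetLike.mem_coe, hSet]
      rfl
    have hmul : ∀ a c d e : G, R a c → R d e → R (a * d) (c * e) := by
      intro a c d e h1 h2
      have := S.mul_mem ((hmem (a, c)).2 h1) ((hmem (d, e)).2 h2)
      exact (hmem _).1 this
    have hinv : ∀ x y : G, R x y → R x⁻¹ y⁻¹ := by
      intro x y h
      exact (hmem _).1 (S.inv_mem ((hmem (x, y)).2 h))
    refine ⟨hEq, ?_, ?_⟩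
    · intro x y h
      unfold polyF
      refine hmul _ _ _ _ ?_ (hEq.refl b)
      exact polyProdR (hEq.refl 1) hmul _ _ _
        (fun i => polyIterR θ hθinv _ _ _ (h i))
    · intro x y h
      unfold polySkew
      refine hmul _ _ _ _ (hEq.refl b⁻¹) ?_
      exact polyProdR (hEq.refl 1) hmul _ _ _
        (fun i => polyIterR θ hθinv _ _ _ (hinv _ _ h))
end

section
/- For every congruence R of (G,f), the set H_R = {x ∈ G : xRe} is a θ-invariant normal subgroup of the group (G,·). -/
lemma polyF_two_slot {G : Type*} [Group G] {n : ℕ} (hn : 2 ≤ n)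
    (θ : G ≃* G) (b : G)
    (hθ : ∀ x : G, (⇑θ)^[n - 1] x = b * x * b⁻¹) (u c : G) :
    polyF n θ b (fun i => if (i : ℕ) = 0 then u else if (i : ℕ) = n - 1 then c else 1)
      = u * b * c := by
  obtain ⟨m, rfl⟩ : ∃ m, n = m + 2 := ⟨n - 2, by omega⟩
  have hlast : (⇑θ)^[m + 1] c = b * c * b⁻¹ := by
    have := hθ c; simpa using this
  rw [polyF, List.ofFn_succ, List.ofFn_succ']
  simp only [List.prod_cons, List.prod_concat]
  have h0 : ((0 : Fin (m+2)) : ℕ) = 0 := rfl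
  have hmid : (List.ofFn fun i : Fin m =>
      (⇑θ)^[((i.castSucc.succ : Fin (m+2)) : ℕ)]
        (if ((i.castSucc.succ : Fin (m+2)) : ℕ) = 0 then u
         else if ((i.castSucc.succ : Fin (m+2)) : ℕ) = m + 2 - 1 then c else 1)).prod = 1 := by
    apply List.prod_eq_one
    intro x hx
    rw [List.mem_ofFn] at hx
    obtain ⟨i, rfl⟩ := hx
    have h1 : ((i.castSucc.succ : Fin (m+2)) : ℕ) = i.val + 1 := by simp
    have h2 : ¬ (i.val + 1 = 0) := by omega
    have h3 : ¬ (i.val + 1 = m + 2 - 1) := by omega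
    simp only [h1, if_neg h2, if_neg h3]
    exact Function.iterate_fixed (map_one θ) _
  rw [hmid]
  have hl : ((Fin.last m).succ : Fin (m+2)).val = m + 1 := by simp
  simp only [h0, hl, if_pos rfl]
  have h4 : ¬ (m + 1 = 0) := by omega
  have h5 : m + 1 = m + 2 - 1 := by omega
  rw [if_neg h4, if_pos h5, Function.iterate_zero_apply, hlast]
  simp
  group

lemma polyF_slot_one {G : Type*} [Group G] {n : ℕ} (hn : 2 ≤ n)
    (θ : G ≃* G) (b : G) (x : G) :
    polyF n θ b (fun i => if (i : ℕ) = 1 then x else 1) = θ x * b := by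
  obtain ⟨m, rfl⟩ : ∃ m, n = m + 2 := ⟨n - 2, by omega⟩
  rw [polyF, List.ofFn_succ, List.ofFn_succ]
  simp only [List.prod_cons]
  have hmid : (List.ofFn fun i : Fin m =>
      (⇑θ)^[((i.succ.succ : Fin (m+2)) : ℕ)]
        (if ((i.succ.succ : Fin (m+2)) : ℕ) = 1 then x else 1)).prod = 1 := by
    apply List.prod_eq_one
    intro y hy
    rw [List.mem_ofFn] at hy
    obtain ⟨i, rfl⟩ := hy
    have h1 : ((i.succ.succ : Fin (m+2)) : ℕ) = i.val + 2 := by simp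
    have h2 : ¬ (i.val + 2 = 1) := by omega
    simp only [h1, if_neg h2]
    exact Function.iterate_fixed (map_one θ) _
  rw [hmid]
  simp

/-- For every congruence `R` of `(G,f)`, the class `H_R = {x : xRe}` of the
identity is a `θ`-invariant normal subgroup of the group `(G,·)`. -/
theorem class_of_identity_normal {G : Type*} [Group G] (n : ℕ) (hn : 2 ≤ n)
    (θ : G ≃* G) (b : G) (hbθ : θ b = b)
    (hθ : ∀ x : G, (⇑θ)^[n - 1] x = b * x * b⁻¹)
    (R : G → G → Prop) (hR : IsPolyCongruence n θ b R) :
    ∃ N : Subgroup G, (N : Set G) = {x : G | R x 1} ∧ N.Normal ∧ ∀ x ∈ N, θ x ∈ N := by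
  obtain ⟨hEq, hF, -⟩ := hR
  -- R is compatible with two-slot substitutions
  have hslot : ∀ u v x y : G, R u v → R x y → R (u * b * x) (v * b * y) := by
    intro u v x y huv hxy
    have h := hF (fun i => if (i : ℕ) = 0 then u else if (i : ℕ) = n - 1 then x else 1)
      (fun i => if (i : ℕ) = 0 then v else if (i : ℕ) = n - 1 then y else 1) ?_
    · rwa [polyF_two_slot hn θ b hθ, polyF_two_slot hn θ b hθ] at h
    · intro i
      by_cases h0 : (i : ℕ) = 0
      · simp only [if_pos h0]; exact huv
      · by_cases h1 : (i : ℕ) = n - 1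
        · simp only [if_neg h0, if_pos h1]; exact hxy
        · simp only [if_neg h0, if_neg h1]; exact hEq.refl 1
  have Lmul : ∀ a x y : G, R x y → R (a * x) (a * y) := by
    intro a x y h
    have := hslot (a * b⁻¹) (a * b⁻¹) x y (hEq.refl _) h
    simpa [inv_mul_cancel_right] using this
  have Rmul : ∀ a x y : G, R x y → R (x * a) (y * a) := by
    intro a x y h
    have := hslot x y (b⁻¹ * a) (b⁻¹ * a) h (hEq.refl _)
    simpa [mul_assoc, mul_inv_cancel_left] using this
  have Tθ : ∀ x y : G, R x y → R (θ x) (θ y) := by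
    intro x y h
    have h2 := hF (fun i => if (i : ℕ) = 1 then x else 1)
      (fun i => if (i : ℕ) = 1 then y else 1) ?_
    · rw [polyF_slot_one hn θ b, polyF_slot_one hn θ b] at h2
      have := Rmul b⁻¹ _ _ h2
      simpa [mul_inv_cancel_right] using this
    · intro i
      by_cases h1 : (i : ℕ) = 1
      · simp only [if_pos h1]; exact h
      · simp only [if_neg h1]; exact hEq.refl 1
  refine ⟨{ carrier := {x : G | R x 1}
            one_mem' := hEq.refl 1
            mul_mem' := ?_
            inv_mem' := ?_ }, rfl, ⟨?_⟩, ?_⟩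
  · intro a c ha hc
    have h := Rmul c a 1 ha
    rw [one_mul] at h
    exact hEq.trans h hc
  · intro a ha
    have h := Rmul a⁻¹ a 1 ha
    simp only [one_mul] at h
    rw [mul_inv_cancel] at h
    exact hEq.symm h
  · intro h hh g
    have h1 := Lmul g _ _ hh
    have h2 := Rmul g⁻¹ _ _ h1
    simpa [mul_inv_cancel] using h2
  · intro x hx
    have := Tθ x 1 hx
    rwa [map_one] at this
end

section
/- Let R be a congruence of (G,f). Then H_R = {x ∈ G : xRe} is a polyadic subgroup of (G,f) (i.e. closed under f and under the skew map) if and only if bRe. -/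
/-- `f(1,…,1) = b`. -/
lemma polyF_ones {G : Type*} [Group G] (n : ℕ) (θ : G ≃* G) (b : G) :
    polyF n θ b (fun _ => (1:G)) = b := by
  unfold polyF
  have h : ∀ x ∈ (List.ofFn fun i : Fin n => (⇑θ)^[(i : ℕ)] ((fun _ => (1:G)) i)), x = 1 := by
    intro x hx
    simp only [List.mem_ofFn] at hx
    obtain ⟨i, rfl⟩ := hx
    simp [Function.iterate_fixed (map_one θ)]
  rw [List.prod_eq_one h, one_mul]

/-- The skew of `1` is `b⁻¹`. -/
lemma polySkew_one {G : Type*} [Group G] (n : ℕ) (θ : G ≃* G) (b : G) :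
    polySkew n θ b (1:G) = b⁻¹ := by
  unfold polySkew
  have h : ∀ x ∈ (List.ofFn fun i : Fin (n-2) => (⇑θ)^[n - 2 - (i : ℕ)] (1:G)⁻¹), x = 1 := by
    intro x hx
    simp only [List.mem_ofFn] at hx
    obtain ⟨i, rfl⟩ := hx
    simp [Function.iterate_fixed (map_one θ)]
  rw [List.prod_eq_one h, mul_one]

/-- Value of `f` at a tuple supported on the first two coordinates. -/
lemma polyF_pair_s7 {G : Type*} [Group G] (m : ℕ) (θ : G ≃* G) (b a c : G) :
    polyF (m+2) θ b (fun i => if i = 0 then a else if i = 1 then c else 1) = a * θ c * b := by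
  unfold polyF
  rw [List.ofFn_succ, List.ofFn_succ, List.prod_cons, List.prod_cons]
  have htail : ∀ x ∈ (List.ofFn fun i : Fin m =>
      (⇑θ)^[((i.succ.succ : Fin (m+2)) : ℕ)]
        ((fun j : Fin (m+2) => if j = 0 then a else if j = 1 then c else (1:G)) i.succ.succ)),
      x = 1 := by
    intro x hx
    simp only [List.mem_ofFn] at hx
    obtain ⟨i, rfl⟩ := hx
    have h0 : (i.succ.succ : Fin (m+2)) ≠ 0 := by simp [Fin.ext_iff]
    have h1 : (i.succ.succ : Fin (m+2)) ≠ 1 := by simp [Fin.ext_iff]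
    simp [h0, h1, Function.iterate_fixed (map_one θ)]
  rw [List.prod_eq_one htail]
  simp [Fin.ext_iff]

/-- For a congruence `R` of `(G,f)`, the set `H_R = {x : xRe}` is a polyadic
subgroup of `(G,f)` iff `bRe`. -/
theorem class_of_identity_polyadic_iff {G : Type*} [Group G] (n : ℕ) (hn : 2 ≤ n)
    (θ : G ≃* G) (b : G) (hbθ : θ b = b)
    (hθ : ∀ x : G, (⇑θ)^[n - 1] x = b * x * b⁻¹)
    (R : G → G → Prop) (hR : IsPolyCongruence n θ b R) :
    IsPolySubgroup n θ b {x : G | R x 1} ↔ R b 1 := by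
  obtain ⟨heq, hf, hsk⟩ := hR
  constructor
  · rintro ⟨-, hclose, -⟩
    have h1 : polyF n θ b (fun _ => (1:G)) ∈ {x : G | R x 1} :=
      hclose _ (fun i => heq.refl 1)
    rwa [polyF_ones] at h1
  · intro hb
    obtain ⟨m, rfl⟩ : ∃ m, n = m + 2 := ⟨n - 2, by omega⟩
    have hbinv : R b⁻¹ 1 := by
      have h1 := hf (fun i => if i = 0 then 1 else if i = 1 then θ.symm (b⁻¹ * b⁻¹) else 1)
        (fun i => if i = 0 then b else if i = 1 then θ.symm (b⁻¹ * b⁻¹) else 1)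
        (fun i => by
          by_cases h : i = 0
          · simpa [h] using heq.symm hb
          · simp only [if_neg h]; exact heq.refl _)
      rw [polyF_pair_s7, polyF_pair_s7] at h1
      simp only [MulEquiv.apply_symm_apply, one_mul] at h1
      have e1 : b⁻¹ * b⁻¹ * b = b⁻¹ := by group
      have e2 : b * (b⁻¹ * b⁻¹) * b = 1 := by group
      rw [e1, e2] at h1
      exact h1
    refine ⟨⟨1, heq.refl 1⟩, ?_, ?_⟩
    · intro x hx
      have h1 := hf x (fun _ => (1:G)) (fun i => hx i)
      rw [polyF_ones] at h1
      exact heq.trans h1 hb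
    · intro x hx
      have h2 := hsk x 1 hx
      rw [polySkew_one] at h2
      exact heq.trans h2 hbinv
end

section
/- (G,f) is UAS if and only if the only θ-invariant normal subgroups of the group (G,·) are the trivial subgroup {e} and G itself. -/
theorem List.prod_ofFn_mulSingle {M : Type*} [Monoid M] {m : ℕ} (j : Fin m) (a : M) :
    (List.ofFn (Pi.mulSingle j a)).prod = a := by
  induction m with
  | zero => exact j.elim0
  | succ m ih =>
    rw [List.ofFn_succ, List.prod_cons]
    cases j using Fin.cases with
    | zero => simp [Fin.succ_ne_zero]
    | succ j =>
      have htail : (fun i : Fin m => (Pi.mulSingle j.succ a : Fin (m + 1) → M) i.succ) =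
          Pi.mulSingle j a := by
        ext i
        simp [Pi.mulSingle_apply]
      rw [htail, ih, Pi.mulSingle_eq_of_ne (Fin.succ_ne_zero j).symm, one_mul]

theorem Con.rel_iterate {M F : Type*} [Mul M] [FunLike F M M] (c : Con M) (θ : F)
    (hc : ∀ x y, c x y → c (θ x) (θ y)) (k : ℕ) {x y : M} (h : c x y) :
    c (θ^[k] x) (θ^[k] y) := by
  induction k with
  | zero => exact h
  | succ k ih => simpa only [Function.iterate_succ_apply'] using hc _ _ ih

section

variable {G : Type*} [Group G]

theorem Con.rel_iff_inv_mul_mem_subgroup (c : Con G) {x y : G} :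
    c x y ↔ x⁻¹ * y ∈ c.subgroup := by
  conv_lhs => rw [← QuotientGroup.con_subgroup c]
  exact QuotientGroup.leftRel_apply

theorem Con.subgroup_eq_bot_iff (c : Con G) : c.subgroup = ⊥ ↔ ∀ x y, c x y ↔ x = y := by
  refine ⟨fun h x y => ?_, fun h => (Subgroup.eq_bot_iff_forall _).2 fun x hx => (h x 1).1 hx⟩
  rw [c.rel_iff_inv_mul_mem_subgroup, h, Subgroup.mem_bot, inv_mul_eq_one]

theorem Con.subgroup_eq_top_iff (c : Con G) : c.subgroup = ⊤ ↔ ∀ x y, c x y :=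
  ⟨fun h x y => by simp [c.rel_iff_inv_mul_mem_subgroup, h],
    fun h => Subgroup.eq_top_iff' _ |>.2 fun x => h x 1⟩

theorem Con.map_mem_subgroup {F : Type*} [FunLike F G G] [MonoidHomClass F G G] (c : Con G)
    (θ : F) (hc : ∀ x y, c x y → c (θ x) (θ y)) {x : G} (hx : x ∈ c.subgroup) :
    θ x ∈ c.subgroup := by
  simpa using hc _ _ hx

theorem QuotientGroup.con_map_rel {F : Type*} [FunLike F G G] [MonoidHomClass F G G]
    {N : Subgroup G} [N.Normal] (θ : F) (hN : ∀ x ∈ N, θ x ∈ N) {x y : G}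
    (h : QuotientGroup.con N x y) : QuotientGroup.con N (θ x) (θ y) := by
  rw [Con.rel_iff_inv_mul_mem_subgroup, Con.subgroup_quotientGroupCon] at h ⊢
  simpa using hN _ h

theorem isPolyCongruence_of_con (n : ℕ) (θ : G ≃* G) (b : G) (c : Con G)
    (hc : ∀ x y, c x y → c (θ x) (θ y)) : IsPolyCongruence n θ b c := by
  refine ⟨c.iseqv, fun x y h => ?_, fun x y h => ?_⟩
  · refine c.mul ?_ (c.refl b)
    simpa only [List.ofFn_eq_map] using c.list_prod fun (i : Fin n) _ => c.rel_iterate θ hc i (h i)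
  · refine c.mul (c.refl _) ?_
    simpa only [List.ofFn_eq_map] using
      c.list_prod fun (i : Fin (n - 2)) _ => c.rel_iterate θ hc (n - 2 - i) (c.inv h)

theorem polyF_cons_mulSingle (m : ℕ) (θ : G ≃* G) (b a u : G) (j : Fin m) :
    polyF (m + 1) θ b (Fin.cons a (Pi.mulSingle j u)) = a * θ^[j + 1] u * b := by
  have hsingle : (fun i : Fin m => θ^[i + 1] ((Pi.mulSingle j u : Fin m → G) i)) =
      Pi.mulSingle j (θ^[j + 1] u) := by
    ext i
    by_cases hij : i = j
    · subst hij; simp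
    · simp [hij, iterate_map_one]
  rw [polyF, List.ofFn_succ, List.prod_cons]
  simp only [Fin.cons_zero, Fin.cons_succ, Fin.val_zero, Fin.val_succ, Function.iterate_zero_apply]
  rw [hsingle, List.prod_ofFn_mulSingle]

namespace IsPolyCongruence

variable {n : ℕ} {θ : G ≃* G} {b : G} {R : G → G → Prop}

theorem rel_mul_iterate_mul (hR : IsPolyCongruence n θ b R) {k : ℕ} (hk : 0 < k) (hkn : k < n)
    {x y u v : G} (hxy : R x y) (huv : R u v) : R (x * θ^[k] u * b) (y * θ^[k] v * b) := by
  obtain ⟨m, rfl⟩ : ∃ m, n = m + 1 := ⟨n - 1, by omega⟩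
  obtain ⟨j, rfl⟩ : ∃ j, k = j + 1 := ⟨k - 1, by omega⟩
  have hj : j < m := by omega
  rw [← polyF_cons_mulSingle m θ b x u ⟨j, hj⟩, ← polyF_cons_mulSingle m θ b y v ⟨j, hj⟩]
  refine hR.2.1 _ _ fun i => Fin.cases hxy (fun i => ?_) i
  rw [Fin.cons_succ, Fin.cons_succ]
  by_cases hij : i = ⟨j, hj⟩
  · subst hij
    simpa only [Pi.mulSingle_eq_same] using huv
  · simpa only [Pi.mulSingle_eq_of_ne hij] using hR.1.refl 1

theorem mul (hR : IsPolyCongruence n θ b R) (hn : 2 ≤ n)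
    (hθ : ∀ x : G, (⇑θ)^[n - 1] x = b * x * b⁻¹) {x y u v : G} (hxy : R x y) (huv : R u v) :
    R (x * u) (y * v) := by
  have hb : ∀ {x y u v : G}, R x y → R u v → R (x * b * u) (y * b * v) := fun hxy huv => by
    simpa [hθ, mul_assoc] using hR.rel_mul_iterate_mul (by omega) (by omega : n - 1 < n) hxy huv
  have hxy' : R (x * b⁻¹) (y * b⁻¹) := by
    simpa [mul_assoc] using hb hxy (hR.1.refl (b⁻¹ * b⁻¹))
  simpa [mul_assoc] using hb hxy' huv

theorem map_rel (hR : IsPolyCongruence n θ b R) (hn : 2 ≤ n)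
    (hθ : ∀ x : G, (⇑θ)^[n - 1] x = b * x * b⁻¹) {u v : G} (huv : R u v) :
    R (θ u) (θ v) := by
  have := hR.mul hn hθ (hR.rel_mul_iterate_mul one_pos (by omega) (hR.1.refl 1) huv)
    (hR.1.refl b⁻¹)
  simpa [mul_assoc] using this

def toCon (hR : IsPolyCongruence n θ b R) (hn : 2 ≤ n)
    (hθ : ∀ x : G, (⇑θ)^[n - 1] x = b * x * b⁻¹) : Con G where
  r := R
  iseqv := hR.1
  mul' := hR.mul hn hθ

end IsPolyCongruence

end

theorem UAS_iff_theta_simple_general {G : Type*} [Group G] (n : ℕ) (hn : 2 ≤ n)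
    (θ : G ≃* G) (b : G)
    (hθ : ∀ x : G, (⇑θ)^[n - 1] x = b * x * b⁻¹) :
    (∀ R : G → G → Prop, IsPolyCongruence n θ b R →
      (∀ x y : G, R x y ↔ x = y) ∨ (∀ x y : G, R x y)) ↔
    (∀ N : Subgroup G, N.Normal → (∀ x ∈ N, θ x ∈ N) → N = ⊥ ∨ N = ⊤) := by
  constructor
  · intro hUAS N _ hθN
    have hc := isPolyCongruence_of_con n θ b (QuotientGroup.con N)
      fun _ _ => QuotientGroup.con_map_rel θ hθN
    simpa only [Con.subgroup_quotientGroupCon] using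
      (hUAS _ hc).imp (Con.subgroup_eq_bot_iff _).2 (Con.subgroup_eq_top_iff _).2
  · intro hsimple R hR
    let c := hR.toCon hn hθ
    exact (hsimple c.subgroup inferInstance fun _ => c.map_mem_subgroup θ
      fun _ _ => hR.map_rel hn hθ).imp c.subgroup_eq_bot_iff.1 c.subgroup_eq_top_iff.1

/-- `(G,f)` is UAS iff the only `θ`-invariant normal subgroups of `(G,·)` are
the trivial subgroup and `G` itself. -/
theorem UAS_iff_theta_simple {G : Type*} [Group G] (n : ℕ) (hn : 2 ≤ n)
    (θ : G ≃* G) (b : G) (hbθ : θ b = b)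
    (hθ : ∀ x : G, (⇑θ)^[n - 1] x = b * x * b⁻¹) :
    (∀ R : G → G → Prop, IsPolyCongruence n θ b R →
      (∀ x y : G, R x y ↔ x = y) ∨ (∀ x y : G, R x y)) ↔
    (∀ N : Subgroup G, N.Normal → (∀ x ∈ N, θ x ∈ N) → N = ⊥ ∨ N = ⊤) :=
  UAS_iff_theta_simple_general n hn θ b hθ
end

section
/- A relation R on G is a congruence of (G,f) if and only if the set {(x,y) ∈ G×G : xRy} is a subgroup of the direct product group G×G that contains the diagonal Δ = {(x,x) : x ∈ G} and is invariant under the automorphism (x,y) ↦ (θ(x),θ(y)). -/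
/-- Product of a list `ofFn g` all of whose entries except possibly the `j`-th are `1`. -/
lemma prod_ofFn_single {M : Type*} [Monoid M] : ∀ {m : ℕ} (g : Fin m → M) (j : Fin m),
    (∀ i, i ≠ j → g i = 1) → (List.ofFn g).prod = g j := by
  intro m
  induction m with
  | zero => exact fun g j _ => j.elim0
  | succ m ih =>
    intro g j h
    rw [List.ofFn_succ, List.prod_cons]
    rcases eq_or_ne j 0 with rfl | hj
    · have h1 : (List.ofFn fun i : Fin m => g i.succ).prod = 1 := by
        apply List.prod_eq_one
        intro x hx
        rw [List.mem_ofFn] at hx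
        obtain ⟨i, rfl⟩ := hx
        exact h _ (Fin.succ_ne_zero i)
      rw [h1, mul_one]
    · obtain ⟨j', rfl⟩ := Fin.eq_succ_of_ne_zero hj
      rw [h 0 (Ne.symm (Fin.succ_ne_zero j')), one_mul]
      exact ih (fun i => g i.succ) j' fun i hi => h i.succ (fun hc => hi (Fin.succ_inj.mp hc))

/-- Product of a list `ofFn g` all of whose entries except possibly the first and last are `1`. -/
lemma prod_ofFn_pair {M : Type*} [Monoid M] {m : ℕ} (g : Fin (m + 2) → M)
    (h : ∀ i, i ≠ 0 → i ≠ Fin.last (m + 1) → g i = 1) :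
    (List.ofFn g).prod = g 0 * g (Fin.last (m + 1)) := by
  rw [List.ofFn_succ, List.prod_cons]
  congr 1
  have h1 : (List.ofFn fun i : Fin (m + 1) => g i.succ).prod
      = (fun i : Fin (m + 1) => g i.succ) (Fin.last m) := by
    apply prod_ofFn_single
    intro i hi
    apply h _ (Fin.succ_ne_zero i)
    intro hc
    exact hi (Fin.succ_injective _ (by rw [hc, Fin.succ_last]))
  rw [h1]
  simp only []
  rw [Fin.succ_last]

/-- `R` is a congruence of `(G,f)` iff `{(x,y) : xRy}` is a `θ`-invariant
subgroup of `G × G` containing the diagonal. -/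
theorem congruence_iff_diagonal_subgroup {G : Type*} [Group G] (n : ℕ) (hn : 2 ≤ n)
    (θ : G ≃* G) (b : G) (hbθ : θ b = b)
    (hθ : ∀ x : G, (⇑θ)^[n - 1] x = b * x * b⁻¹)
    (R : G → G → Prop) :
    IsPolyCongruence n θ b R ↔
      (∃ S : Subgroup (G × G), (S : Set (G × G)) = {p : G × G | R p.1 p.2}) ∧
      (∀ x : G, R x x) ∧
      (∀ x y : G, R x y → R (θ x) (θ y)) := by
  have hone : ∀ k : ℕ, (⇑θ)^[k] (1 : G) = 1 := fun k => Function.iterate_fixed (map_one θ) k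
  constructor
  · -- forward direction
    rintro ⟨hEq, hf, -⟩
    obtain ⟨m, rfl⟩ : ∃ m, n = m + 2 := ⟨n - 2, by omega⟩
    -- value of polyF on a vector supported at the first and last positions
    have key : ∀ u w : G,
        polyF (m + 2) θ b (fun i => if i = 0 then u else if i = Fin.last (m + 1) then w else 1)
          = u * b * w := by
      intro u w
      unfold polyF
      rw [prod_ofFn_pair]
      · have hne : (Fin.last (m + 1) : Fin (m + 2)) ≠ 0 := by
          simp [Fin.ext_iff]
        simp only [if_pos, if_neg hne, Fin.val_zero, Function.iterate_zero, id_eq, Fin.val_last]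
        rw [show (⇑θ)^[m + 1] w = b * w * b⁻¹ from hθ w]
        group
      · intro i h0 hl
        simp only [if_neg h0, if_neg hl]
        exact hone _
    -- value of polyF on a vector supported at position 1
    have key1 : ∀ u : G,
        polyF (m + 2) θ b (fun i => if i = (⟨1, by omega⟩ : Fin (m + 2)) then u else 1)
          = θ u * b := by
      intro u
      unfold polyF
      rw [prod_ofFn_single (j := (⟨1, by omega⟩ : Fin (m + 2)))]
      · simp
      · intro i hi
        simp only [if_neg hi]
        exact hone _
    -- two-point congruence step
    have hTP : ∀ u u' w w' : G, R u u' → R w w' → R (u * b * w) (u' * b * w') := by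
      intro u u' w w' hu hw
      have h := hf (fun i => if i = 0 then u else if i = Fin.last (m + 1) then w else 1)
        (fun i => if i = 0 then u' else if i = Fin.last (m + 1) then w' else 1) ?_
      · rwa [key, key] at h
      · intro i
        by_cases h0 : i = 0
        · simp only [if_pos h0]; exact hu
        · by_cases hl : i = Fin.last (m + 1)
          · simp only [if_neg h0, if_pos hl]; exact hw
          · simp only [if_neg h0, if_neg hl]; exact hEq.refl 1
    have hL : ∀ a u u' : G, R u u' → R (a * u) (a * u') := by
      intro a u u' h
      have h2 := hTP (a * b⁻¹) (a * b⁻¹) u u' (hEq.refl _) h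
      have e : ∀ v : G, a * b⁻¹ * b * v = a * v := by intro v; group
      rwa [e, e] at h2
    have hRt : ∀ c u u' : G, R u u' → R (u * c) (u' * c) := by
      intro c u u' h
      have h2 := hTP u u' (b⁻¹ * c) (b⁻¹ * c) h (hEq.refl _)
      have e : ∀ v : G, v * b * (b⁻¹ * c) = v * c := by intro v; group
      rwa [e, e] at h2
    have hmul : ∀ x x' y y' : G, R x x' → R y y' → R (x * y) (x' * y') := by
      intro x x' y y' hx hy
      have h2 := hTP x x' (b⁻¹ * y) (b⁻¹ * y') hx (hL b⁻¹ y y' hy)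
      have e : ∀ v w : G, v * b * (b⁻¹ * w) = v * w := by intro v w; group
      rwa [e, e] at h2
    have hinv : ∀ x y : G, R x y → R x⁻¹ y⁻¹ := by
      intro x y h
      have h1 : R (x⁻¹ * x) (x⁻¹ * y) := hL x⁻¹ x y h
      have h2 : R (x⁻¹ * x * y⁻¹) (x⁻¹ * y * y⁻¹) := hRt y⁻¹ _ _ h1
      have e1 : x⁻¹ * x * y⁻¹ = y⁻¹ := by group
      have e2 : x⁻¹ * y * y⁻¹ = x⁻¹ := by group
      rw [e1, e2] at h2
      exact hEq.symm h2
    refine ⟨⟨{ carrier := {p : G × G | R p.1 p.2}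
               mul_mem' := fun {p q} hp hq => hmul _ _ _ _ hp hq
               one_mem' := hEq.refl 1
               inv_mem' := fun {p} hp => hinv _ _ hp }, rfl⟩,
        fun x => hEq.refl x, ?_⟩
    -- θ-invariance
    intro u v huv
    have h := hf (fun i => if i = (⟨1, by omega⟩ : Fin (m + 2)) then u else 1)
      (fun i => if i = (⟨1, by omega⟩ : Fin (m + 2)) then v else 1) ?_
    · rw [key1, key1] at h
      have h2 := hRt b⁻¹ _ _ h
      have e : ∀ w : G, θ w * b * b⁻¹ = θ w := by intro w; group
      rwa [e, e] at h2
    · intro i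
      by_cases hi : i = (⟨1, by omega⟩ : Fin (m + 2))
      · simp only [if_pos hi]; exact huv
      · simp only [if_neg hi]; exact hEq.refl 1
  · -- reverse direction
    rintro ⟨⟨S, hS⟩, hrefl, hth⟩
    have hmem : ∀ x y : G, R x y ↔ ((x, y) : G × G) ∈ S := by
      intro x y
      rw [← SetLike.mem_coe, hS]
      rfl
    have hsymm : ∀ {x y : G}, R x y → R y x := by
      intro x y h
      have hxy := (hmem x y).1 h
      have hm : ((y, x) : G × G) ∈ S := by
        have h2 := S.mul_mem (S.mul_mem ((hmem y y).1 (hrefl y)) (S.inv_mem hxy))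
          ((hmem x x).1 (hrefl x))
        have e : ((y, y) : G × G) * (x, y)⁻¹ * (x, x) = (y, x) := by
          rw [Prod.inv_mk, Prod.mk_mul_mk, Prod.mk_mul_mk]
          exact Prod.ext (by group) (by group)
        rwa [e] at h2
      exact (hmem y x).2 hm
    have htrans : ∀ {x y z : G}, R x y → R y z → R x z := by
      intro x y z h1 h2
      have hm : ((x, z) : G × G) ∈ S := by
        have h3 := S.mul_mem (S.mul_mem ((hmem x y).1 h1) (S.inv_mem ((hmem y y).1 (hrefl y))))
          ((hmem y z).1 h2)
        have e : ((x, y) : G × G) * (y, y)⁻¹ * (y, z) = (x, z) := by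
          rw [Prod.inv_mk, Prod.mk_mul_mk, Prod.mk_mul_mk]
          exact Prod.ext (by group) (by group)
        rwa [e] at h3
      exact (hmem x z).2 hm
    have hit : ∀ (k : ℕ) (x y : G), R x y → R ((⇑θ)^[k] x) ((⇑θ)^[k] y) := by
      intro k
      induction k with
      | zero => intro x y h; simpa using h
      | succ k ih =>
        intro x y h
        rw [Function.iterate_succ_apply', Function.iterate_succ_apply']
        exact hth _ _ (ih x y h)
    refine ⟨⟨hrefl, hsymm, htrans⟩, ?_, ?_⟩
    · -- compatibility with polyF
      intro x y hxy
      set p : Fin n → G × G := fun i => ((⇑θ)^[(i : ℕ)] (x i), (⇑θ)^[(i : ℕ)] (y i)) with hp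
      have hl : (List.ofFn p).prod ∈ S := by
        apply S.list_prod_mem
        intro q hq
        rw [List.mem_ofFn] at hq
        obtain ⟨i, rfl⟩ := hq
        exact (hmem _ _).1 (hit _ _ _ (hxy i))
      have hq : (List.ofFn p).prod * ((b, b) : G × G) ∈ S :=
        S.mul_mem hl ((hmem b b).1 (hrefl b))
      have e : ((polyF n θ b x, polyF n θ b y) : G × G) = (List.ofFn p).prod * (b, b) := by
        refine Prod.ext ?_ ?_
        · show polyF n θ b x = (List.ofFn p).prod.1 * b
          have e1 := map_list_prod (MonoidHom.fst G G) (List.ofFn p)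
          rw [List.map_ofFn] at e1
          unfold polyF
          exact congrArg (· * b) e1.symm
        · show polyF n θ b y = (List.ofFn p).prod.2 * b
          have e2 := map_list_prod (MonoidHom.snd G G) (List.ofFn p)
          rw [List.map_ofFn] at e2
          unfold polyF
          exact congrArg (· * b) e2.symm
      exact (hmem _ _).2 (e ▸ hq)
    · -- compatibility with polySkew
      intro x y hxy
      have hinvm : ((x⁻¹, y⁻¹) : G × G) ∈ S := by
        have := S.inv_mem ((hmem x y).1 hxy)
        rwa [Prod.inv_mk] at this
      have hinvR : R x⁻¹ y⁻¹ := (hmem _ _).2 hinvm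
      set p : Fin (n - 2) → G × G :=
        fun i => ((⇑θ)^[n - 2 - (i : ℕ)] x⁻¹, (⇑θ)^[n - 2 - (i : ℕ)] y⁻¹) with hp
      have hl : (List.ofFn p).prod ∈ S := by
        apply S.list_prod_mem
        intro q hq
        rw [List.mem_ofFn] at hq
        obtain ⟨i, rfl⟩ := hq
        exact (hmem _ _).1 (hit _ _ _ hinvR)
      have hbm : ((b⁻¹, b⁻¹) : G × G) ∈ S := by
        have := S.inv_mem ((hmem b b).1 (hrefl b))
        rwa [Prod.inv_mk] at this
      have hq : ((b⁻¹, b⁻¹) : G × G) * (List.ofFn p).prod ∈ S := S.mul_mem hbm hl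
      have e : ((polySkew n θ b x, polySkew n θ b y) : G × G)
          = ((b⁻¹, b⁻¹) : G × G) * (List.ofFn p).prod := by
        refine Prod.ext ?_ ?_
        · show polySkew n θ b x = b⁻¹ * (List.ofFn p).prod.1
          have e1 := map_list_prod (MonoidHom.fst G G) (List.ofFn p)
          rw [List.map_ofFn] at e1
          unfold polySkew
          exact congrArg (b⁻¹ * ·) e1.symm
        · show polySkew n θ b y = b⁻¹ * (List.ofFn p).prod.2
          have e2 := map_list_prod (MonoidHom.snd G G) (List.ofFn p)
          rw [List.map_ofFn] at e2
          unfold polySkew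
          exact congrArg (b⁻¹ * ·) e2.symm
      exact (hmem _ _).2 (e ▸ hq)
end

section
/- Let R and Q be congruences of (G,f). Then H_{RQ} = H_R·H_Q (the product of the subgroups H_R and H_Q of (G,·)), where RQ denotes the composition of R and Q, and H_{R∩Q} = H_R ∩ H_Q. -/
lemma polyF_single {G : Type*} [Group G] (m : ℕ) (θ : G ≃* G) (b : G)
    (hθ : ∀ x : G, (⇑θ)^[m + 1] x = b * x * b⁻¹) (a z : G) :
    polyF (m + 2) θ b (fun i => if i = 0 then a else if i = Fin.last (m + 1) then z else 1)
      = a * b * z := by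
  unfold polyF
  rw [List.ofFn_succ, List.ofFn_succ']
  have hmid : (List.ofFn fun i : Fin m =>
      (⇑θ)^[((i.castSucc.succ : Fin (m+2)) : ℕ)]
        (if i.castSucc.succ = 0 then a else
          if i.castSucc.succ = Fin.last (m+1) then z else 1)).prod = 1 := by
    apply List.prod_eq_one
    intro x hx
    rw [List.mem_ofFn] at hx
    obtain ⟨i, rfl⟩ := hx
    have h0 : (i.castSucc.succ : Fin (m+2)) ≠ 0 := Fin.succ_ne_zero _
    have hl : (i.castSucc.succ : Fin (m+2)) ≠ Fin.last (m+1) := by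
      simp [Fin.ext_iff, Fin.is_lt, Nat.ne_of_lt, i.is_lt]
    simp [h0, hl]
  simp only [List.concat_eq_append, List.prod_cons, List.prod_append, hmid]
  have hlast : ((Fin.last m).succ : Fin (m+2)) = Fin.last (m+1) := rfl
  have hne : (Fin.last m).succ ≠ (0 : Fin (m+2)) := Fin.succ_ne_zero _
  simp [hne, hlast, hθ]
  group

lemma poly_left_mul {G : Type*} [Group G] (m : ℕ) (θ : G ≃* G) (b : G)
    (hθ : ∀ x : G, (⇑θ)^[m + 1] x = b * x * b⁻¹) (S : G → G → Prop)
    (hS : IsPolyCongruence (m + 2) θ b S) (v : G) {z w : G} (h : S z w) :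
    S (v * z) (v * w) := by
  have key := hS.2.1
    (fun i => if i = 0 then v * b⁻¹ else if i = Fin.last (m + 1) then z else 1)
    (fun i => if i = 0 then v * b⁻¹ else if i = Fin.last (m + 1) then w else 1)
    (fun i => by
      by_cases h0 : i = 0
      · simp only [h0, if_pos rfl]; exact hS.1.refl _
      · by_cases hl : i = Fin.last (m + 1)
        · simpa [h0, hl] using h
        · simp only [if_neg h0, if_neg hl]; exact hS.1.refl _)
  rw [polyF_single m θ b hθ, polyF_single m θ b hθ] at key
  have e : ∀ u : G, v * b⁻¹ * b * u = v * u := by intro u; group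
  rwa [e, e] at key

open Pointwise in
/-- For congruences `R, Q` of `(G,f)`: `H_{RQ} = H_R · H_Q` (where `RQ` is the
relational composition `x(RQ)y ↔ ∃ u, xQu ∧ uRy`), and `H_{R∩Q} = H_R ∩ H_Q`. -/
theorem class_of_identity_of_product {G : Type*} [Group G] (n : ℕ) (hn : 2 ≤ n)
    (θ : G ≃* G) (b : G) (hbθ : θ b = b)
    (hθ : ∀ x : G, (⇑θ)^[n - 1] x = b * x * b⁻¹)
    (R Q : G → G → Prop)
    (hR : IsPolyCongruence n θ b R) (hQ : IsPolyCongruence n θ b Q) :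
    ({x : G | ∃ u : G, Q x u ∧ R u 1} = ({x : G | R x 1} * {x : G | Q x 1} : Set G)) ∧
    ({x : G | R x 1 ∧ Q x 1} = {x : G | R x 1} ∩ {x : G | Q x 1}) := by
  obtain ⟨m, rfl⟩ : ∃ m, n = m + 2 := ⟨n - 2, by omega⟩
  have hθ' : ∀ x : G, (⇑θ)^[m + 1] x = b * x * b⁻¹ := hθ
  constructor
  · ext x
    simp only [Set.mem_setOf_eq, Set.mem_mul]
    constructor
    · rintro ⟨u, hxu, hu1⟩
      refine ⟨u, hu1, u⁻¹ * x, ?_, by group⟩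
      have := poly_left_mul m θ b hθ' Q hQ u⁻¹ hxu
      simpa using this
    · rintro ⟨r, hr, q, hq, rfl⟩
      refine ⟨r, ?_, hr⟩
      have := poly_left_mul m θ b hθ' Q hQ r hq
      simpa using this
  · rfl
end

section
/- Assume n ≥ 3 and let R be a congruence of (G,f). Then R is normal (i.e. R = ∼_H for some normal polyadic subgroup H of (G,f)) if and only if there exists a ∈ G such that (1) a R ā, and (2) f(x̄, x, …, x, a, x) R a for all x ∈ G (with x repeated n−3 times between x̄ and a). -/
/-- The relation `∼_H`: `x ∼_H y` iff there exist `h₁,…,h_{n−1} ∈ H` with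
`y = f(x, h₁, …, h_{n−1})`. -/
def polySim {G : Type*} [Group G] (n : ℕ) (θ : G ≃* G) (b : G) (H : Set G)
    (x y : G) : Prop :=
  ∃ v : Fin n → G,
    (∀ i : Fin n, ((i : ℕ) = 0 → v i = x) ∧ ((i : ℕ) ≠ 0 → v i ∈ H)) ∧
    y = polyF n θ b v

section PolyAux

variable {G : Type*} [Group G]

lemma polyIter_one (θ : G ≃* G) (j : ℕ) : (⇑θ)^[j] (1:G) = 1 := by
  induction j with
  | zero => rfl
  | succ k ih => rw [Function.iterate_succ_apply', ih, map_one]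

lemma polyIter_inv (θ : G ≃* G) (j : ℕ) (u : G) : (⇑θ)^[j] u⁻¹ = ((⇑θ)^[j] u)⁻¹ := by
  induction j with
  | zero => rfl
  | succ k ih => rw [Function.iterate_succ_apply', Function.iterate_succ_apply', ih, map_inv]

lemma polyOfFn_prod_succ {k : ℕ} (f : Fin (k+1) → G) :
    (List.ofFn f).prod = f 0 * (List.ofFn fun i : Fin k => f i.succ).prod := by
  rw [List.ofFn_succ, List.prod_cons]

lemma polyOfFn_prod_last {k : ℕ} (f : Fin (k+1) → G) :
    (List.ofFn f).prod = (List.ofFn fun i : Fin k => f i.castSucc).prod * f (Fin.last k) := by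
  rw [List.ofFn_succ', List.concat_eq_append, List.prod_append, List.prod_singleton]

/-- `Q(x) = θ(x)·θ²(x)⋯θ^k(x)`. -/
def polyQ (θ : G ≃* G) (k : ℕ) (x : G) : G :=
  (List.ofFn fun i : Fin k => (⇑θ)^[(i:ℕ)+1] x).prod

def polyC (θ : G ≃* G) (k : ℕ) (a : G) : G :=
  (List.ofFn fun i : Fin k => (⇑θ)^[(i:ℕ)+2] a).prod

lemma polyQ_succ (θ : G ≃* G) (k : ℕ) (x : G) :
    polyQ θ (k+1) x = polyQ θ k x * (⇑θ)^[k+1] x := by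
  unfold polyQ
  rw [polyOfFn_prod_last]
  simp

lemma polyQ_one (θ : G ≃* G) (k : ℕ) : polyQ θ k (1:G) = 1 := by
  simp [polyQ, polyIter_one]

lemma polyRevProd (θ : G ≃* G) (k : ℕ) (x : G) :
    (List.ofFn fun i : Fin k => (⇑θ)^[k-(i:ℕ)] x⁻¹).prod = (polyQ θ k x)⁻¹ := by
  induction k with
  | zero => simp [polyQ]
  | succ k ih =>
    rw [polyOfFn_prod_succ, polyQ_succ]
    have h1 : (List.ofFn fun i : Fin k =>
        (fun j : Fin (k+1) => (⇑θ)^[k+1-(j:ℕ)] x⁻¹) i.succ)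
        = List.ofFn fun i : Fin k => (⇑θ)^[k-(i:ℕ)] x⁻¹ := by
      apply congrArg
      funext i
      simp [Fin.val_succ, Nat.succ_sub_succ]
    rw [h1, ih]
    simp only [Fin.val_zero, Nat.sub_zero]
    rw [mul_inv_rev, polyIter_inv]

lemma polySkew_eq (m : ℕ) (θ : G ≃* G) (b x : G) :
    polySkew (m+3) θ b x = b⁻¹ * (polyQ θ (m+1) x)⁻¹ := by
  show b⁻¹ * (List.ofFn fun i : Fin (m+1) => (⇑θ)^[m+1-(i:ℕ)] x⁻¹).prod = _
  rw [polyRevProd]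

lemma polyF_split (m : ℕ) (θ : G ≃* G) (b : G) (v : Fin (m+3) → G) :
    polyF (m+3) θ b v =
      v 0 * (List.ofFn fun i : Fin (m+1) =>
          (⇑θ)^[(i:ℕ)+1] (v ⟨(i:ℕ)+1, by omega⟩)).prod *
        ((⇑θ)^[m+2] (v ⟨m+2, by omega⟩) * b) := by
  unfold polyF
  rw [polyOfFn_prod_succ, polyOfFn_prod_last]
  have e1 : ∀ i : Fin (m+1), (i.castSucc.succ : Fin (m+3)) = ⟨(i:ℕ)+1, by omega⟩ := by
    intro i; ext; simp
  have e2 : ((Fin.last (m+1)).succ : Fin (m+3)) = ⟨m+2, by omega⟩ := by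
    ext; simp
  simp only [e1, e2, Fin.val_zero, Function.iterate_zero_apply, Fin.val_succ, Fin.coe_castSucc]
  simp [mul_assoc]

/-- Tuple `(x, a, a, …, a, z)`. -/
def polyV1 (a x z : G) (m : ℕ) : Fin (m+3) → G :=
  fun i => if (i:ℕ) = 0 then x else if (i:ℕ) = m+2 then z else a

/-- Tuple `(x̄, x, …, x, h, x)`. -/
def polyV2 (θ : G ≃* G) (b x h : G) (m : ℕ) : Fin (m+3) → G :=
  fun i => if (i:ℕ) = 0 then polySkew (m+3) θ b x else if (i:ℕ) = m+1 then h else x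

/-- Tuple `(y, k, a, a, …, a)`. -/
def polyV3 (a y k : G) (m : ℕ) : Fin (m+3) → G :=
  fun i => if (i:ℕ) = 0 then y else if (i:ℕ) = 1 then k else a

lemma polyV1_mid {a x z : G} {m c : ℕ} (h : c < m+3) (hc : c ≠ 0) (hc2 : c ≠ m+2) :
    polyV1 a x z m ⟨c, h⟩ = a := by
  unfold polyV1; rw [if_neg hc, if_neg hc2]

lemma polyV1_last {a x z : G} {m c : ℕ} (h : c < m+3) (hc2 : c = m+2) :
    polyV1 a x z m ⟨c, h⟩ = z := by
  show (if c = 0 then x else if c = m+2 then z else a) = z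
  rw [if_neg (by omega), if_pos hc2]

lemma polyF_V1 (m : ℕ) (θ : G ≃* G) (b a x z : G) :
    polyF (m+3) θ b (polyV1 a x z m) = x * polyQ θ (m+1) a * ((⇑θ)^[m+2] z * b) := by
  rw [polyF_split]
  rw [show polyV1 a x z m 0 = x from rfl]
  rw [show polyV1 a x z m ⟨m+2, by omega⟩ = z from polyV1_last _ rfl]
  rw [show (List.ofFn fun i : Fin (m+1) =>
      (⇑θ)^[(i:ℕ)+1] (polyV1 a x z m ⟨(i:ℕ)+1, by omega⟩)) =
      List.ofFn fun i : Fin (m+1) => (⇑θ)^[(i:ℕ)+1] a from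
    congrArg _ (funext fun i => by
      have hi := i.isLt
      rw [polyV1_mid _ (by omega) (by omega)])]
  rfl

lemma polyV2_mid {θ : G ≃* G} {b x h : G} {m c : ℕ} (hlt : c < m+3) (hc : c ≠ 0) (hc2 : c ≠ m+1) :
    polyV2 θ b x h m ⟨c, hlt⟩ = x := by
  unfold polyV2; rw [if_neg hc, if_neg hc2]

lemma polyV2_m1 {θ : G ≃* G} {b x h : G} {m c : ℕ} (hlt : c < m+3) (hc2 : c = m+1) :
    polyV2 θ b x h m ⟨c, hlt⟩ = h := by
  show (if c = 0 then polySkew (m+3) θ b x else if c = m+1 then h else x) = h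
  rw [if_neg (by omega), if_pos hc2]

lemma polyF_V2 (m : ℕ) (θ : G ≃* G) (b x h : G) :
    polyF (m+3) θ b (polyV2 θ b x h m) =
      polySkew (m+3) θ b x * (polyQ θ m x * ((⇑θ)^[m+1] h * ((⇑θ)^[m+2] x * b))) := by
  rw [polyF_split, polyOfFn_prod_last]
  simp only [Fin.coe_castSucc, Fin.val_last]
  rw [show polyV2 θ b x h m 0 = polySkew (m+3) θ b x from rfl]
  rw [show polyV2 θ b x h m ⟨m+2, by omega⟩ = x from polyV2_mid _ (by omega) (by omega)]
  rw [show polyV2 θ b x h m ⟨m+1, by omega⟩ = h from polyV2_m1 _ rfl]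
  rw [show (List.ofFn fun i : Fin m =>
      (⇑θ)^[(i:ℕ)+1] (polyV2 θ b x h m ⟨(i:ℕ)+1, by omega⟩)) =
      List.ofFn fun i : Fin m => (⇑θ)^[(i:ℕ)+1] x from
    congrArg _ (funext fun i => by
      have hi := i.isLt
      rw [polyV2_mid _ (by omega) (by omega)])]
  show _ * ((polyQ θ m x) * _) * _ = _
  simp [mul_assoc]

lemma polyV3_mid {a y k : G} {m c : ℕ} (hlt : c < m+3) (hc : c ≠ 0) (hc2 : c ≠ 1) :
    polyV3 a y k m ⟨c, hlt⟩ = a := by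
  unfold polyV3; rw [if_neg hc, if_neg hc2]

lemma polyV3_one {a y k : G} {m c : ℕ} (hlt : c < m+3) (hc2 : c = 1) :
    polyV3 a y k m ⟨c, hlt⟩ = k := by
  show (if c = 0 then y else if c = 1 then k else a) = k
  rw [if_neg (by omega), if_pos hc2]

lemma polyF_V3 (m : ℕ) (θ : G ≃* G) (b a y k : G) :
    polyF (m+3) θ b (polyV3 a y k m) =
      y * θ k * (polyC θ m a * ((⇑θ)^[m+2] a * b)) := by
  rw [polyF_split, polyOfFn_prod_succ]
  simp only [Fin.val_zero, Fin.val_succ]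
  rw [show polyV3 a y k m 0 = y from rfl]
  rw [show polyV3 a y k m ⟨m+2, by omega⟩ = a from polyV3_mid _ (by omega) (by omega)]
  rw [show polyV3 a y k m ⟨0+1, by omega⟩ = k from polyV3_one _ rfl]
  rw [show (List.ofFn fun i : Fin m =>
      (⇑θ)^[(i:ℕ)+1+1] (polyV3 a y k m ⟨(i:ℕ)+1+1, by omega⟩)) =
      List.ofFn fun i : Fin m => (⇑θ)^[(i:ℕ)+2] a from
    congrArg _ (funext fun i => by
      have hi := i.isLt
      rw [polyV3_mid _ (by omega) (by omega)])]
  show _ * ((⇑θ)^[0+1] k * (polyC θ m a)) * _ = _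
  simp [mul_assoc]

lemma polyF_V1_skew (m : ℕ) (θ : G ≃* G) (b a x : G)
    (hθ' : ∀ u : G, (⇑θ)^[m+2] u = b * u * b⁻¹) :
    polyF (m+3) θ b (polyV1 a x (polySkew (m+3) θ b a) m) = x := by
  rw [polyF_V1, polySkew_eq, hθ']
  group

lemma polyF_V1_solve (m : ℕ) (θ : G ≃* G) (b a x y : G)
    (hθ' : ∀ u : G, (⇑θ)^[m+2] u = b * u * b⁻¹) :
    polyF (m+3) θ b (polyV1 a x (polySkew (m+3) θ b a * x⁻¹ * y) m) = y := by
  rw [polyF_V1, polySkew_eq, hθ']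
  group

lemma polyF_V1_left (m : ℕ) (θ : G ≃* G) (b d u : G)
    (hθ' : ∀ u : G, (⇑θ)^[m+2] u = b * u * b⁻¹) :
    polyF (m+3) θ b (polyV1 1 (d * b⁻¹) u m) = d * u := by
  rw [polyF_V1, polyQ_one, hθ']
  group

lemma polyF_V2' (m : ℕ) (θ : G ≃* G) (b x h : G)
    (hθ' : ∀ u : G, (⇑θ)^[m+2] u = b * u * b⁻¹) :
    polyF (m+3) θ b (polyV2 θ b x h m) = θ.symm (x⁻¹ * h) * x := by
  have hθ1 : ∀ u : G, (⇑θ)^[m+1] u = b * θ.symm u * b⁻¹ := by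
    intro u
    have h2 : (⇑θ)^[m+1+1] (θ.symm u) = b * θ.symm u * b⁻¹ := hθ' (θ.symm u)
    rwa [Function.iterate_succ_apply, MulEquiv.apply_symm_apply] at h2
  rw [polyF_V2, polySkew_eq, polyQ_succ]
  simp only [hθ1, hθ']
  rw [map_mul, map_inv]
  group

end PolyAux

/-- For `n ≥ 3`, a congruence `R` of `(G,f)` is normal (i.e. `R = ∼_H` for some
normal polyadic subgroup `H`) iff there exists `a ∈ G` with (1) `a R ā` and
(2) `f(x̄, x, …, x, a, x) R a` for all `x` (with `x` repeated `n−3` times). -/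
theorem normal_congruence_iff {G : Type*} [Group G] (n : ℕ) (hn : 3 ≤ n)
    (θ : G ≃* G) (b : G) (hbθ : θ b = b)
    (hθ : ∀ x : G, (⇑θ)^[n - 1] x = b * x * b⁻¹)
    (R : G → G → Prop) (hR : IsPolyCongruence n θ b R) :
    (∃ H : Set G, IsNormalPolySubgroup n θ b H ∧
        ∀ x y : G, R x y ↔ polySim n θ b H x y) ↔
      ∃ a : G, R a (polySkew n θ b a) ∧
        ∀ x : G, R (polyF n θ b (fun i : Fin n =>
          if (i : ℕ) = 0 then polySkew n θ b x else if (i : ℕ) = n - 2 then a else x)) a := by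
  obtain ⟨m, rfl⟩ : ∃ m, n = m + 3 := ⟨n - 3, by omega⟩
  obtain ⟨hE, hfc, hsc⟩ := hR
  have hθ' : ∀ x : G, (⇑θ)^[m+2] x = b * x * b⁻¹ := hθ
  constructor
  · rintro ⟨H, ⟨⟨⟨a, haH⟩, hfH, hsH⟩, hN⟩, hRsim⟩
    have hHR : ∀ h ∈ H, ∀ h' ∈ H, R h h' := by
      intro h hh h' hh'
      have hk : θ.symm (h⁻¹ * h') * h ∈ H := hN h h' hh'
      set k := θ.symm (h⁻¹ * h') * h with hkdef
      have s1 : R h (polyF (m+3) θ b (polyV3 a h k m)) := by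
        refine (hRsim _ _).mpr ⟨polyV3 a h k m, fun i => ⟨fun h0 => ?_, fun h0 => ?_⟩, rfl⟩
        · unfold polyV3; rw [if_pos h0]
        · unfold polyV3; rw [if_neg h0]
          split_ifs
          · exact hk
          · exact haH
      have s2 : R h' (polyF (m+3) θ b (polyV3 a h' h m)) := by
        refine (hRsim _ _).mpr ⟨polyV3 a h' h m, fun i => ⟨fun h0 => ?_, fun h0 => ?_⟩, rfl⟩
        · unfold polyV3; rw [if_pos h0]
        · unfold polyV3; rw [if_neg h0]
          split_ifs
          · exact hh
          · exact haH
      have key : polyF (m+3) θ b (polyV3 a h k m) = polyF (m+3) θ b (polyV3 a h' h m) := by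
        rw [polyF_V3, polyF_V3]
        have hmul : h * θ k = h' * θ h := by
          rw [hkdef, map_mul, MulEquiv.apply_symm_apply]
          group
        rw [hmul]
      rw [← key] at s2
      exact hE.trans s1 (hE.symm s2)
    refine ⟨a, hHR a haH _ (hsH a haH), fun x => ?_⟩
    have h2 : θ.symm (x⁻¹ * a) * x ∈ H := hN x a haH
    have h1 : polyF (m+3) θ b (polyV2 θ b x a m) = θ.symm (x⁻¹ * a) * x :=
      polyF_V2' m θ b x a hθ'
    show R (polyF (m+3) θ b (polyV2 θ b x a m)) a
    rw [h1]
    exact hHR _ h2 a haH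
  · rintro ⟨a, ha1, ha2⟩
    have ha2' : ∀ x : G, R (polyF (m+3) θ b (polyV2 θ b x a m)) a := fun x => ha2 x
    have hL : ∀ d u u' : G, R u u' → R (d * u) (d * u') := by
      intro d u u' huu
      have h3 := hfc (polyV1 1 (d * b⁻¹) u m) (polyV1 1 (d * b⁻¹) u' m) ?_
      · rwa [polyF_V1_left m θ b d u hθ', polyF_V1_left m θ b d u' hθ'] at h3
      · intro i
        unfold polyV1
        split_ifs
        · exact hE.refl _
        · exact huu
        · exact hE.refl _
    have hCa : R (polyF (m+3) θ b (polyV1 a a a m)) a := by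
      have c2 : R (polyF (m+3) θ b (polyV1 a a a m))
          (polyF (m+3) θ b (polyV1 a a (polySkew (m+3) θ b a) m)) := by
        apply hfc
        intro i
        unfold polyV1
        split_ifs
        · exact hE.refl _
        · exact ha1
        · exact hE.refl _
      rwa [polyF_V1_skew m θ b a a hθ'] at c2
    refine ⟨{h : G | R h a}, ⟨⟨⟨a, hE.refl a⟩, ?_, ?_⟩, ?_⟩, ?_⟩
    · -- closure under f
      intro v hv
      have hV1all : ∀ i : Fin (m+3), polyV1 a a a m i = a := by
        intro i; unfold polyV1; split_ifs <;> rfl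
      have c1 : R (polyF (m+3) θ b v) (polyF (m+3) θ b (polyV1 a a a m)) := by
        apply hfc
        intro i
        rw [hV1all i]
        exact hv i
      exact hE.trans c1 hCa
    · -- closure under skew
      intro h hh
      exact hE.trans (hsc h a hh) (hE.symm ha1)
    · -- normality
      intro x h hh
      have c1 : R (polyF (m+3) θ b (polyV2 θ b x h m))
          (polyF (m+3) θ b (polyV2 θ b x a m)) := by
        apply hfc
        intro i
        unfold polyV2
        split_ifs
        · exact hE.refl _
        · exact hh
        · exact hE.refl _
      rw [polyF_V2' m θ b x h hθ'] at c1
      exact hE.trans c1 (ha2' x)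
    · -- R = ∼_H
      intro x y
      constructor
      · intro hxy
        refine ⟨polyV1 a x (polySkew (m+3) θ b a * x⁻¹ * y) m,
          fun i => ⟨fun h0 => ?_, fun h0 => ?_⟩, ?_⟩
        · unfold polyV1; rw [if_pos h0]
        · unfold polyV1; rw [if_neg h0]
          split_ifs
          · show R (polySkew (m+3) θ b a * x⁻¹ * y) a
            have l1 := hL (polySkew (m+3) θ b a * x⁻¹) y x (hE.symm hxy)
            have l2 : polySkew (m+3) θ b a * x⁻¹ * x = polySkew (m+3) θ b a := by group
            rw [l2] at l1
            exact hE.trans l1 (hE.symm ha1)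
          · exact hE.refl a
        · exact (polyF_V1_solve m θ b a x y hθ').symm
      · rintro ⟨v, hv, rfl⟩
        have c1 : R (polyF (m+3) θ b v) (polyF (m+3) θ b (polyV1 a x a m)) := by
          apply hfc
          intro i
          by_cases h0 : (i:ℕ) = 0
          · rw [(hv i).1 h0]
            unfold polyV1; rw [if_pos h0]
            exact hE.refl x
          · have hm := (hv i).2 h0
            unfold polyV1; rw [if_neg h0]
            split_ifs <;> exact hm
        have c2 : R (polyF (m+3) θ b (polyV1 a x a m))
            (polyF (m+3) θ b (polyV1 a x (polySkew (m+3) θ b a) m)) := by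
          apply hfc
          intro i
          unfold polyV1
          split_ifs
          · exact hE.refl _
          · exact ha1
          · exact hE.refl _
        rw [polyF_V1_skew m θ b a x hθ'] at c2
        exact hE.symm (hE.trans c1 c2)
end

section
/- Let u ∈ G and H ⊆ G. Then H is a θ-invariant normal subgroup of the group (G,·) if and only if H·u = {h·u : h ∈ H} is a ψ_u-invariant normal subgroup of the group G_u. -/
/-- `K` is a `ψ_u`-invariant normal subgroup of the group `G_u` (the group on
the carrier of `G` with operation `x∗y = x·u⁻¹·y`, identity `u`, inverse
`x^{-u} = u·x⁻¹·u`), where `ψ_u(x) = u·θ(x)·θ(u⁻¹)`: it contains the identity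
`u`, is closed under `∗` and `x ↦ x^{-u}`, is normal in `G_u`
(`x^{-u} ∗ h ∗ x = u·x⁻¹·h·u⁻¹·x ∈ K`), and is `ψ_u`-invariant. -/
def IsPsiInvNormalSubgroupGu {G : Type*} [Group G] (θ : G ≃* G) (u : G) (K : Set G) : Prop :=
  u ∈ K ∧
  (∀ a ∈ K, ∀ c ∈ K, a * u⁻¹ * c ∈ K) ∧
  (∀ a ∈ K, u * a⁻¹ * u ∈ K) ∧
  (∀ x : G, ∀ h ∈ K, u * x⁻¹ * h * u⁻¹ * x ∈ K) ∧
  (∀ h ∈ K, u * θ h * θ u⁻¹ ∈ K)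

/-- `K` is a `θ`-invariant normal subgroup of `(G,·)`. -/
def IsThetaInvNormalSubgroup {G : Type*} [Group G] (θ : G ≃* G) (K : Set G) : Prop :=
  (1 : G) ∈ K ∧
  (∀ a ∈ K, ∀ c ∈ K, a * c ∈ K) ∧
  (∀ a ∈ K, a⁻¹ ∈ K) ∧
  (∀ x : G, ∀ h ∈ K, x * h * x⁻¹ ∈ K) ∧
  (∀ h ∈ K, θ h ∈ K)

lemma memH_of_eq {G : Type*} [Group G] {u : G} {H : Set G} {z w : G}
    (hz : z ∈ (fun h : G => h * u) '' H) (he : z = w * u) : w ∈ H := by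
  obtain ⟨h, hh, hhe⟩ := hz
  have : h = w := mul_right_cancel (b := u) (hhe.trans he)
  exact this ▸ hh

/-- `H` is a `θ`-invariant normal subgroup of `(G,·)` iff
`H·u = {h·u : h ∈ H}` is a `ψ_u`-invariant normal subgroup of `G_u`. -/
theorem theta_inv_normal_iff_Gu {G : Type*} [Group G] (n : ℕ) (hn : 2 ≤ n)
    (θ : G ≃* G) (b : G) (hbθ : θ b = b)
    (hθ : ∀ x : G, (⇑θ)^[n - 1] x = b * x * b⁻¹)
    (u : G) (H : Set G) :
    IsThetaInvNormalSubgroup θ H ↔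
      IsPsiInvNormalSubgroupGu θ u ((fun h : G => h * u) '' H) := by
  constructor
  · rintro ⟨h1, hmul, hinv, hnorm, hθi⟩
    refine ⟨⟨1, h1, by group⟩, ?_, ?_, ?_, ?_⟩
    · rintro _ ⟨a, ha, rfl⟩ _ ⟨c, hc, rfl⟩
      exact ⟨a * c, hmul a ha c hc, by group⟩
    · rintro _ ⟨a, ha, rfl⟩
      exact ⟨a⁻¹, hinv a ha, by group⟩
    · rintro x _ ⟨h, hh, rfl⟩
      exact ⟨u * x⁻¹ * h * (u * x⁻¹)⁻¹, hnorm (u * x⁻¹) h hh, by group⟩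
    · rintro _ ⟨h, hh, rfl⟩
      refine ⟨u * θ h * u⁻¹, hnorm u (θ h) (hθi h hh), ?_⟩
      simp only [map_mul, map_inv]
      group
  · rintro ⟨hu, hmul, hinv, hnorm, hpsi⟩
    have h1 : (1 : G) ∈ H := memH_of_eq hu (by group)
    have hN : ∀ x : G, ∀ h ∈ H, x * h * x⁻¹ ∈ H := by
      intro x h hh
      have := hnorm (x⁻¹ * u) (h * u) ⟨h, hh, rfl⟩
      exact memH_of_eq this (by group)
    refine ⟨h1, ?_, ?_, hN, ?_⟩
    · intro a ha c hc
      have := hmul (a * u) ⟨a, ha, rfl⟩ (c * u) ⟨c, hc, rfl⟩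
      exact memH_of_eq this (by group)
    · intro a ha
      have := hinv (a * u) ⟨a, ha, rfl⟩
      exact memH_of_eq this (by group)
    · intro h hh
      have hm := hpsi (h * u) ⟨h, hh, rfl⟩
      have : u * θ h * u⁻¹ ∈ H := by
        refine memH_of_eq hm ?_
        simp only [map_mul, map_inv]
        group
      have := hN u⁻¹ _ this
      simpa [mul_assoc] using this
end
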